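/- arXiv:math/9503233 — 9 statements merged into one kernel-verified Lean document; each statement's English description precedes it below -/
import Mathlib

section
/- Let m, n, p, q be natural numbers with m ≥ n. Let H00, H01, H10, H11 be real matrices of sizes p×p, p×q, q×p, q×q respectively. Let A be a real m×n matrix admitting a singular value decomposition A = Q · S · Rᵀ, where Q is an m×m orthogonal matrix, R is an n×n orthogonal matrix, σ : Fin n → ℝ, and S is the m×n matrix whose (i,j) entry is σ j if the indices i and j are equal as natural numbers and 0 otherwise. Then the characteristic polynomial of the (m·p+n·q)×(m·p+n·q) block matrix [[I_m ⊗ H00, A ⊗ H01], [Aᵀ ⊗ H10, I_n ⊗ H11]] equals (∏_{j : Fin n} charpoly(H↑(σ j))) · (charpoly(H00))^(m−n). -/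
/-!
Conjugating by the orthogonal matrix `diag(Q ⊗ I, R ⊗ I)` replaces `A` by the rectangular
diagonal matrix `S` without changing the characteristic polynomial. After regrouping the
indices, the matrix built from `S` is block diagonal: for each `j < n` the coordinates
`(j, ·)` of both blocks carry a copy of `H↑(σ j)`, and each of the `m - n` remaining rows
of `S` is zero, contributing a copy of `H00`.
-/

open Matrix Polynomial Kronecker

namespace Matrix

variable {K : Type*} [CommRing K]

theorem charmatrix_blockDiagonal {o n : Type*} [Fintype o] [DecidableEq o] [Fintype n]
    [DecidableEq n] (B : o → Matrix n n K) :
    charmatrix (blockDiagonal B) = blockDiagonal fun i => charmatrix (B i) := by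
  rw [show (fun i => charmatrix (B i)) = (fun _ => scalar n (X : K[X])) - fun i => (B i).map C
    from rfl, blockDiagonal_sub]
  simp [charmatrix, blockDiagonal_map _ _ (map_zero _), blockDiagonal_diagonal]

theorem charpoly_blockDiagonal {o n : Type*} [Fintype o] [DecidableEq o] [Fintype n]
    [DecidableEq n] (B : o → Matrix n n K) :
    (blockDiagonal B).charpoly = ∏ i, (B i).charpoly := by
  rw [charpoly, charmatrix_blockDiagonal, det_blockDiagonal]
  rfl

theorem charpoly_one_kronecker {k p : Type*} [Fintype k] [DecidableEq k] [Fintype p]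
    [DecidableEq p] (H : Matrix p p K) :
    ((1 : Matrix k k K) ⊗ₖ H).charpoly = H.charpoly ^ Fintype.card k := by
  rw [one_kronecker, charpoly_reindex, charpoly_blockDiagonal, Finset.prod_const,
    Finset.card_univ]

section KroneckerBlocks

variable {m m' n k p q : Type*} [Fintype m] [DecidableEq m] [Fintype m'] [DecidableEq m']
  [Fintype n] [DecidableEq n] [Fintype k] [DecidableEq k] [Fintype p] [DecidableEq p]
  [Fintype q] [DecidableEq q]
  (H00 : Matrix p p K) (H01 : Matrix p q K) (H10 : Matrix q p K) (H11 : Matrix q q K)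

def kroneckerBlocks (S : Matrix m n K) : Matrix (m × p ⊕ n × q) (m × p ⊕ n × q) K :=
  fromBlocks (1 ⊗ₖ H00) (S ⊗ₖ H01) (Sᵀ ⊗ₖ H10) (1 ⊗ₖ H11)

variable {H00 H01 H10 H11}

theorem charpoly_kroneckerBlocks_mul_mul_transpose {Q : Matrix m m K} {R : Matrix n n K}
    (hQ : Qᵀ * Q = 1) (hR : Rᵀ * R = 1) (S : Matrix m n K) :
    (kroneckerBlocks H00 H01 H10 H11 (Q * S * Rᵀ)).charpoly =
      (kroneckerBlocks H00 H01 H10 H11 S).charpoly := by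
  let P := fromBlocks (Q ⊗ₖ (1 : Matrix p p K)) 0 0 (R ⊗ₖ (1 : Matrix q q K))
  let P' := fromBlocks (Qᵀ ⊗ₖ (1 : Matrix p p K)) 0 0 (Rᵀ ⊗ₖ (1 : Matrix q q K))
  have hP'P : P' * P = 1 := by
    simp [P, P', fromBlocks_multiply, ← mul_kronecker_mul, hQ, hR]
  have hconj : kroneckerBlocks H00 H01 H10 H11 (Q * S * Rᵀ) =
      P * kroneckerBlocks H00 H01 H10 H11 S * P' := by
    simp only [kroneckerBlocks, P, P', fromBlocks_multiply, Matrix.zero_mul, Matrix.mul_zero,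
      add_zero, zero_add, ← mul_kronecker_mul, Matrix.mul_one, Matrix.one_mul,
      transpose_mul, transpose_transpose, mul_eq_one_comm.mp hQ, mul_eq_one_comm.mp hR,
      Matrix.mul_assoc]
  rw [hconj, charpoly_mul_comm, ← Matrix.mul_assoc, hP'P, Matrix.one_mul]

theorem charpoly_kroneckerBlocks_submatrix (e : m' ≃ m) (S : Matrix m n K) :
    (kroneckerBlocks H00 H01 H10 H11 (S.submatrix e id)).charpoly =
      (kroneckerBlocks H00 H01 H10 H11 S).charpoly := by
  rw [← charpoly_reindex ((e.prodCongr (Equiv.refl p)).sumCongr (Equiv.refl (n × q)))]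
  congr 1
  ext (⟨i, a⟩ | ⟨j, b⟩) (⟨i', a'⟩ | ⟨j', b'⟩) <;> simp [kroneckerBlocks, one_apply]

theorem charpoly_kroneckerBlocks_fromRows_zero (D : Matrix m n K) :
    (kroneckerBlocks H00 H01 H10 H11 (fromRows D (0 : Matrix k n K))).charpoly =
      (kroneckerBlocks H00 H01 H10 H11 D).charpoly * H00.charpoly ^ Fintype.card k := by
  let e : (m ⊕ k) × p ⊕ n × q ≃ (m × p ⊕ n × q) ⊕ k × p :=
    ((Equiv.sumProdDistrib m k p).sumCongr (Equiv.refl _)).trans <|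
      (Equiv.sumAssoc _ _ _).trans <|
        ((Equiv.refl _).sumCongr (Equiv.sumComm _ _)).trans (Equiv.sumAssoc _ _ _).symm
  have hre : reindex e e (kroneckerBlocks H00 H01 H10 H11 (fromRows D (0 : Matrix k n K))) =
      fromBlocks (kroneckerBlocks H00 H01 H10 H11 D) 0 0 (1 ⊗ₖ H00) := by
    ext ((⟨i, a⟩ | ⟨j, b⟩) | ⟨l, a⟩) ((⟨i', a'⟩ | ⟨j', b'⟩) | ⟨l', a'⟩) <;>
      simp [e, kroneckerBlocks, one_apply]
  rw [← charpoly_reindex e, hre, charpoly_fromBlocks_zero₁₂, charpoly_one_kronecker]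

theorem charpoly_kroneckerBlocks_diagonal (σ : n → K) :
    (kroneckerBlocks H00 H01 H10 H11 (diagonal σ)).charpoly =
      ∏ j, (fromBlocks H00 (σ j • H01) (σ j • H10) H11).charpoly := by
  let e : n × p ⊕ n × q ≃ (p ⊕ q) × n :=
    (Equiv.prodSumDistrib n p q).symm.trans (Equiv.prodComm _ _)
  have hre : reindex e e (kroneckerBlocks H00 H01 H10 H11 (diagonal σ)) =
      blockDiagonal fun j => fromBlocks H00 (σ j • H01) (σ j • H10) H11 := by
    ext ⟨a | b, j⟩ ⟨a' | b', j'⟩ <;>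
      simp [e, kroneckerBlocks, one_apply, blockDiagonal_apply, diagonal_apply]
  rw [← charpoly_reindex e, hre, charpoly_blockDiagonal]

end KroneckerBlocks

end Matrix

theorem stmt0 (m n p q : ℕ) (hmn : m ≥ n)
    (H00 : Matrix (Fin p) (Fin p) ℝ) (H01 : Matrix (Fin p) (Fin q) ℝ)
    (H10 : Matrix (Fin q) (Fin p) ℝ) (H11 : Matrix (Fin q) (Fin q) ℝ)
    (A : Matrix (Fin m) (Fin n) ℝ)
    (Q : Matrix (Fin m) (Fin m) ℝ) (R : Matrix (Fin n) (Fin n) ℝ)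
    (σ : Fin n → ℝ) (S : Matrix (Fin m) (Fin n) ℝ)
    (hQ : Qᵀ * Q = 1) (hR : Rᵀ * R = 1)
    (hS : ∀ (i : Fin m) (j : Fin n), S i j = if (i : ℕ) = (j : ℕ) then σ j else 0)
    (hA : A = Q * S * Rᵀ) :
    (Matrix.fromBlocks ((1 : Matrix (Fin m) (Fin m) ℝ) ⊗ₖ H00) (A ⊗ₖ H01)
        (Aᵀ ⊗ₖ H10) ((1 : Matrix (Fin n) (Fin n) ℝ) ⊗ₖ H11)).charpoly =
      (∏ j : Fin n,
        (Matrix.fromBlocks H00 (σ j • H01) (σ j • H10) H11).charpoly) *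
        H00.charpoly ^ (m - n) := by
  let e : Fin n ⊕ Fin (m - n) ≃ Fin m := finSumFinEquiv.trans (finCongr (by omega))
  have hSe : S.submatrix e id = fromRows (diagonal σ) 0 := by
    ext (j | l) j'
    · by_cases h : j = j' <;> simp [e, hS, Fin.val_inj, h]
    · have : n + (l : ℕ) ≠ j' := by omega
      simp [e, hS, this]
  change (kroneckerBlocks H00 H01 H10 H11 A).charpoly = _
  rw [hA, charpoly_kroneckerBlocks_mul_mul_transpose hQ hR,
    ← charpoly_kroneckerBlocks_submatrix e, hSe, charpoly_kroneckerBlocks_fromRows_zero,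
    charpoly_kroneckerBlocks_diagonal, Fintype.card_fin]
end

section
/- Let A be an m×n complex matrix and B an n×m complex matrix. Then there exist an invertible m×m complex matrix Q, an invertible n×n complex matrix R, an m×n complex matrix S, and an n×m complex matrix T such that A = Q · S · R⁻¹, B = R · T · Q⁻¹, the entries S i j and T i j vanish whenever i > j (comparing indices as natural numbers), and for every j < min(m,n), either S j j = T j j or S j j · T j j = 0. -/
open Matrix

lemma exists_eig (k : ℕ) (M : Matrix (Fin (k+1)) (Fin (k+1)) ℂ) :
    ∃ (μ : ℂ) (v : Fin (k+1) → ℂ), v ≠ 0 ∧ M.mulVec v = μ • v := by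
  obtain ⟨μ, hμ⟩ := Module.End.exists_eigenvalue (Matrix.mulVecLin M)
  obtain ⟨v, hv⟩ := hμ.exists_hasEigenvector
  exact ⟨μ, v, hv.2, by simpa [Matrix.mulVecLin_apply] using hv.apply_eq_smul⟩

lemma col_ext (k : ℕ) (v : Fin (k+1) → ℂ) (hv : v ≠ 0) :
    ∃ Q : Matrix (Fin (k+1)) (Fin (k+1)) ℂ, IsUnit Q.det ∧ ∀ i, Q i 0 = v i := by
  have : ∃ l, v l ≠ 0 := by
    by_contra h; push_neg at h; exact hv (funext h)
  obtain ⟨l, hl⟩ := this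
  refine ⟨((1 : Matrix (Fin (k+1)) (Fin (k+1)) ℂ).updateCol l v).submatrix id (Equiv.swap 0 l), ?_, ?_⟩
  · rw [Matrix.det_permute']
    have h1 : ((1 : Matrix (Fin (k+1)) (Fin (k+1)) ℂ).updateCol l v).det = v l := by
      rw [← Matrix.cramer_apply, Matrix.cramer_one]; rfl
    rw [h1]
    exact IsUnit.mul ((Equiv.swap 0 l).sign.isUnit.map (Int.castRingHom ℂ)) (isUnit_iff_ne_zero.mpr hl)
  · intro i
    simp [Matrix.submatrix_apply, Equiv.swap_apply_left, Matrix.updateCol_apply]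

lemma step (m n : ℕ) (A : Matrix (Fin (m+1)) (Fin (n+1)) ℂ) (B : Matrix (Fin (n+1)) (Fin (m+1)) ℂ) :
    ∃ (q : Fin (m+1) → ℂ) (r : Fin (n+1) → ℂ) (α β : ℂ), q ≠ 0 ∧ r ≠ 0 ∧
      A.mulVec r = α • q ∧ B.mulVec q = β • r ∧ (α = β ∨ α * β = 0) := by
  by_cases hB : ∃ w, w ≠ 0 ∧ B.mulVec w = 0
  · obtain ⟨w, hw0, hw⟩ := hB
    by_cases hA : ∃ u, u ≠ 0 ∧ A.mulVec u = 0
    · obtain ⟨u, hu0, hu⟩ := hA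
      exact ⟨w, u, 0, 0, hw0, hu0, by simp [hu], by simp [hw], Or.inl rfl⟩
    · -- A injective; use eigenvector of B*A
      push_neg at hA
      obtain ⟨μ, w', hw'0, hw'⟩ := exists_eig n (B * A)
      have hAw : A.mulVec w' ≠ 0 := hA w' hw'0
      rcases eq_or_ne μ 0 with rfl | hμ
      · refine ⟨A.mulVec w', w', 1, 0, hAw, hw'0, by simp, ?_, Or.inr (by ring)⟩
        rw [Matrix.mulVec_mulVec, hw']
      · obtain ⟨c, hc⟩ := IsAlgClosed.exists_pow_nat_eq (k := ℂ) μ⁻¹ zero_lt_two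
        have hc0 : c ≠ 0 := fun h => hμ (inv_eq_zero.mp (by rw [h] at hc; simpa using hc.symm))
        have hcc : c * μ = c⁻¹ := by
          field_simp
          rw [hc, inv_mul_cancel₀ hμ]
        refine ⟨c • A.mulVec w', w', c⁻¹, c⁻¹, by simp [hAw, hc0], hw'0, ?_, ?_, Or.inl rfl⟩
        · rw [smul_smul, inv_mul_cancel₀ hc0, one_smul]
        · rw [Matrix.mulVec_smul, Matrix.mulVec_mulVec, hw', smul_smul, hcc]
  · -- B injective; use eigenvector of A*B
    push_neg at hB
    obtain ⟨lam, v, hv0, hv⟩ := exists_eig m (A * B)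
    have hBv : B.mulVec v ≠ 0 := hB v hv0
    rcases eq_or_ne lam 0 with rfl | hlam
    · refine ⟨v, B.mulVec v, 0, 1, hv0, hBv, ?_, by simp, Or.inr (by ring)⟩
      rw [Matrix.mulVec_mulVec, hv]
    · obtain ⟨c, hc⟩ := IsAlgClosed.exists_pow_nat_eq (k := ℂ) lam⁻¹ zero_lt_two
      have hc0 : c ≠ 0 := fun h => hlam (inv_eq_zero.mp (by rw [h] at hc; simpa using hc.symm))
      have hcc : c * lam = c⁻¹ := by
        field_simp
        rw [hc, inv_mul_cancel₀ hlam]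
      refine ⟨v, c • B.mulVec v, c⁻¹, c⁻¹, hv0, by simp [hBv, hc0], ?_, ?_, Or.inl rfl⟩
      · rw [Matrix.mulVec_smul, Matrix.mulVec_mulVec, hv, smul_smul, hcc]
      · rw [smul_smul, inv_mul_cancel₀ hc0, one_smul]
def eqv (k : ℕ) : Fin 1 ⊕ Fin k ≃ Fin (k+1) where
  toFun := Sum.elim (fun _ => 0) Fin.succ
  invFun := Fin.cases (Sum.inl 0) Sum.inr
  left_inv := by
    rintro (x | x)
    · simp [Fin.fin_one_eq_zero x]
    · simp
  right_inv := by
    refine Fin.cases ?_ ?_ <;> simp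

@[simp] lemma eqv_symm_zero (k : ℕ) : (eqv k).symm 0 = Sum.inl 0 := by
  simp [eqv]

@[simp] lemma eqv_symm_succ (k : ℕ) (i : Fin k) : (eqv k).symm i.succ = Sum.inr i := by
  simp [eqv]

lemma conj_iff {k l : ℕ} {Q : Matrix (Fin k) (Fin k) ℂ} {R : Matrix (Fin l) (Fin l) ℂ}
    (hQ : IsUnit Q.det) (hR : IsUnit R.det) (A S : Matrix (Fin k) (Fin l) ℂ) :
    A = Q * S * R⁻¹ ↔ Q⁻¹ * A * R = S := by
  constructor
  · rintro rfl
    calc Q⁻¹ * (Q * S * R⁻¹) * R = (Q⁻¹ * Q) * S * (R⁻¹ * R) := by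
          simp only [Matrix.mul_assoc]
      _ = S := by rw [Matrix.nonsing_inv_mul _ hQ, Matrix.nonsing_inv_mul _ hR,
          Matrix.one_mul, Matrix.mul_one]
  · rintro rfl
    calc A = (Q * Q⁻¹) * A * (R * R⁻¹) := by
          rw [Matrix.mul_nonsing_inv _ hQ, Matrix.mul_nonsing_inv _ hR,
            Matrix.one_mul, Matrix.mul_one]
      _ = Q * (Q⁻¹ * A * R) * R⁻¹ := by simp only [Matrix.mul_assoc]

lemma colfact {k l : ℕ} (M : Matrix (Fin (k+1)) (Fin (l+1)) ℂ)
    (Q : Matrix (Fin (k+1)) (Fin (k+1)) ℂ) (R : Matrix (Fin (l+1)) (Fin (l+1)) ℂ)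
    (hQ : IsUnit Q.det) (q : Fin (k+1) → ℂ) (r : Fin (l+1) → ℂ) (α : ℂ)
    (hQc : ∀ i, Q i 0 = q i) (hRc : ∀ j, R j 0 = r j) (hMr : M.mulVec r = α • q)
    (i : Fin (k+1)) : (Q⁻¹ * M * R) i 0 = if i = 0 then α else 0 := by
  have h1 : (Q⁻¹ * M * R) i 0 = ((Q⁻¹ * M).mulVec r) i := by
    rw [Matrix.mul_apply]
    simp [Matrix.mulVec, dotProduct, hRc]
  have h2 : Q⁻¹.mulVec q = fun i' => (Q⁻¹ * Q) i' 0 := by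
    funext i'
    rw [Matrix.mul_apply]
    simp [Matrix.mulVec, dotProduct, hQc]
  rw [h1, ← Matrix.mulVec_mulVec, hMr, Matrix.mulVec_smul, h2,
    Matrix.nonsing_inv_mul _ hQ]
  rw [Pi.smul_apply, smul_eq_mul, Matrix.one_apply]
  split <;> simp

theorem stmt2 (m n : ℕ)
    (A : Matrix (Fin m) (Fin n) ℂ) (B : Matrix (Fin n) (Fin m) ℂ) :
    ∃ (Q : Matrix (Fin m) (Fin m) ℂ) (R : Matrix (Fin n) (Fin n) ℂ)
      (S : Matrix (Fin m) (Fin n) ℂ) (T : Matrix (Fin n) (Fin m) ℂ),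
      IsUnit Q.det ∧ IsUnit R.det ∧
      A = Q * S * R⁻¹ ∧ B = R * T * Q⁻¹ ∧
      (∀ (i : Fin m) (j : Fin n), (j : ℕ) < (i : ℕ) → S i j = 0) ∧
      (∀ (i : Fin n) (j : Fin m), (j : ℕ) < (i : ℕ) → T i j = 0) ∧
      (∀ (j : ℕ) (hm : j < m) (hn : j < n),
        S ⟨j, hm⟩ ⟨j, hn⟩ = T ⟨j, hn⟩ ⟨j, hm⟩ ∨
        S ⟨j, hm⟩ ⟨j, hn⟩ * T ⟨j, hn⟩ ⟨j, hm⟩ = 0) := by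
  induction m generalizing n with
  | zero =>
    exact ⟨1, 1, A, B, by simp, by simp, by simp, by simp,
      fun i => i.elim0, fun i j => j.elim0, fun j hm _ => absurd hm (Nat.not_lt_zero j)⟩
  | succ m ih =>
    match n, A, B with
    | 0, A, B =>
      exact ⟨1, 1, A, B, by simp, by simp, by simp, by simp,
        fun i j => j.elim0, fun i => i.elim0, fun j _ hn => absurd hn (Nat.not_lt_zero j)⟩
    | n+1, A, B =>
      obtain ⟨q, r, α, β, hq0, hr0, hAr, hBq, hαβ⟩ := step m n A B
      obtain ⟨Q₀, hQ₀, hQ₀c⟩ := col_ext m q hq0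
      obtain ⟨R₀, hR₀, hR₀c⟩ := col_ext n r hr0
      set S₀ := Q₀⁻¹ * A * R₀ with hS₀def
      set T₀ := R₀⁻¹ * B * Q₀ with hT₀def
      have colS : ∀ i, S₀ i 0 = if i = 0 then α else 0 :=
        colfact A Q₀ R₀ hQ₀ q r α hQ₀c hR₀c hAr
      have colT : ∀ i, T₀ i 0 = if i = 0 then β else 0 :=
        colfact B R₀ Q₀ hR₀ r q β hR₀c hQ₀c hBq
      set A' := Matrix.of (fun (i : Fin m) (j : Fin n) => S₀ i.succ j.succ) with hA'def
      set B' := Matrix.of (fun (i : Fin n) (j : Fin m) => T₀ i.succ j.succ) with hB'def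
      obtain ⟨Q', R', S', T', hQ', hR', hAQ, hBR, triS', triT', diag'⟩ := ih n A' B'
      have hS'eq : Q'⁻¹ * A' * R' = S' := (conj_iff hQ' hR' A' S').mp hAQ
      have hT'eq : R'⁻¹ * B' * Q' = T' := (conj_iff hR' hQ' B' T').mp hBR
      -- block matrices
      set Qb : Matrix (Fin 1 ⊕ Fin m) (Fin 1 ⊕ Fin m) ℂ := Matrix.fromBlocks 1 0 0 Q' with hQb
      set Rb : Matrix (Fin 1 ⊕ Fin n) (Fin 1 ⊕ Fin n) ℂ := Matrix.fromBlocks 1 0 0 R' with hRb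
      set QbI : Matrix (Fin 1 ⊕ Fin m) (Fin 1 ⊕ Fin m) ℂ := Matrix.fromBlocks 1 0 0 Q'⁻¹ with hQbI
      set RbI : Matrix (Fin 1 ⊕ Fin n) (Fin 1 ⊕ Fin n) ℂ := Matrix.fromBlocks 1 0 0 R'⁻¹ with hRbI
      set Qbs := Qb.submatrix (eqv m).symm (eqv m).symm with hQbs
      set Rbs := Rb.submatrix (eqv n).symm (eqv n).symm with hRbs
      have hQbsInv : Qbs⁻¹ = QbI.submatrix (eqv m).symm (eqv m).symm := by
        apply Matrix.inv_eq_right_inv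
        rw [hQbs, Matrix.submatrix_mul_equiv]
        rw [show Qb * QbI = 1 by
          rw [hQb, hQbI, Matrix.fromBlocks_multiply]
          simp [Matrix.mul_nonsing_inv _ hQ', Matrix.fromBlocks_one]]
        exact Matrix.submatrix_one_equiv _
      have hRbsInv : Rbs⁻¹ = RbI.submatrix (eqv n).symm (eqv n).symm := by
        apply Matrix.inv_eq_right_inv
        rw [hRbs, Matrix.submatrix_mul_equiv]
        rw [show Rb * RbI = 1 by
          rw [hRb, hRbI, Matrix.fromBlocks_multiply]
          simp [Matrix.mul_nonsing_inv _ hR', Matrix.fromBlocks_one]]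
        exact Matrix.submatrix_one_equiv _
      have hdetQbs : IsUnit Qbs.det := by
        rw [hQbs, Matrix.det_submatrix_equiv_self, hQb, Matrix.det_fromBlocks_zero₂₁]
        simpa using hQ'
      have hdetRbs : IsUnit Rbs.det := by
        rw [hRbs, Matrix.det_submatrix_equiv_self, hRb, Matrix.det_fromBlocks_zero₂₁]
        simpa using hR'
      -- S₀ and T₀ as block matrices
      have hS₀blk : S₀ = (Matrix.fromBlocks (Matrix.of fun (_ : Fin 1) (_ : Fin 1) => α)
          (Matrix.of fun (_ : Fin 1) (j : Fin n) => S₀ 0 j.succ) 0 A').submatrix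
          (eqv m).symm (eqv n).symm := by
        ext i j
        rw [Matrix.submatrix_apply]
        induction i using Fin.cases with
        | zero =>
          induction j using Fin.cases with
          | zero => simpa using colS 0
          | succ j => simp
        | succ i =>
          induction j using Fin.cases with
          | zero => simpa using (colS i.succ).trans (if_neg (Fin.succ_ne_zero i))
          | succ j => simp [hA'def]
      have hT₀blk : T₀ = (Matrix.fromBlocks (Matrix.of fun (_ : Fin 1) (_ : Fin 1) => β)
          (Matrix.of fun (_ : Fin 1) (j : Fin m) => T₀ 0 j.succ) 0 B').submatrix
          (eqv n).symm (eqv m).symm := by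
        ext i j
        rw [Matrix.submatrix_apply]
        induction i using Fin.cases with
        | zero =>
          induction j using Fin.cases with
          | zero => simpa using colT 0
          | succ j => simp
        | succ i =>
          induction j using Fin.cases with
          | zero => simpa using (colT i.succ).trans (if_neg (Fin.succ_ne_zero i))
          | succ j => simp [hB'def]
      -- final matrices
      refine ⟨Q₀ * Qbs, R₀ * Rbs,
        (Matrix.fromBlocks (Matrix.of fun (_ : Fin 1) (_ : Fin 1) => α)
          ((Matrix.of fun (_ : Fin 1) (j : Fin n) => S₀ 0 j.succ) * R') 0 S').submatrix
          (eqv m).symm (eqv n).symm,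
        (Matrix.fromBlocks (Matrix.of fun (_ : Fin 1) (_ : Fin 1) => β)
          ((Matrix.of fun (_ : Fin 1) (j : Fin m) => T₀ 0 j.succ) * Q') 0 T').submatrix
          (eqv n).symm (eqv m).symm, ?_, ?_, ?_, ?_, ?_, ?_, ?_⟩
      · rw [Matrix.det_mul]; exact hQ₀.mul hdetQbs
      · rw [Matrix.det_mul]; exact hR₀.mul hdetRbs
      · rw [conj_iff (by rw [Matrix.det_mul]; exact hQ₀.mul hdetQbs)
          (by rw [Matrix.det_mul]; exact hR₀.mul hdetRbs)]
        rw [Matrix.mul_inv_rev, hQbsInv]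
        calc QbI.submatrix (eqv m).symm (eqv m).symm * Q₀⁻¹ * A * (R₀ * Rbs)
            = QbI.submatrix (eqv m).symm (eqv m).symm * S₀ * Rbs := by
              rw [hS₀def]; simp only [Matrix.mul_assoc]
          _ = _ := by
              rw [hS₀blk, hRbs, Matrix.submatrix_mul_equiv, Matrix.submatrix_mul_equiv]
              congr 1
              rw [hQbI, hRb, Matrix.fromBlocks_multiply, Matrix.fromBlocks_multiply]
              congr 1 <;> simp [Matrix.mul_assoc, hS'eq]
      · rw [conj_iff (by rw [Matrix.det_mul]; exact hR₀.mul hdetRbs)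
          (by rw [Matrix.det_mul]; exact hQ₀.mul hdetQbs)]
        rw [Matrix.mul_inv_rev, hRbsInv]
        calc RbI.submatrix (eqv n).symm (eqv n).symm * R₀⁻¹ * B * (Q₀ * Qbs)
            = RbI.submatrix (eqv n).symm (eqv n).symm * T₀ * Qbs := by
              rw [hT₀def]; simp only [Matrix.mul_assoc]
          _ = _ := by
              rw [hT₀blk, hQbs, Matrix.submatrix_mul_equiv, Matrix.submatrix_mul_equiv]
              congr 1
              rw [hRbI, hQb, Matrix.fromBlocks_multiply, Matrix.fromBlocks_multiply]
              congr 1 <;> simp [Matrix.mul_assoc, hT'eq]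
      · intro i j hij
        rw [Matrix.submatrix_apply]
        induction i using Fin.cases with
        | zero => exact absurd hij (Nat.not_lt_zero _)
        | succ i =>
          induction j using Fin.cases with
          | zero => simp
          | succ j =>
            simp only [eqv_symm_succ, Matrix.fromBlocks_apply₂₂]
            exact triS' i j (Nat.lt_of_succ_lt_succ hij)
      · intro i j hij
        rw [Matrix.submatrix_apply]
        induction i using Fin.cases with
        | zero => exact absurd hij (Nat.not_lt_zero _)
        | succ i =>
          induction j using Fin.cases with
          | zero => simp
          | succ j =>
            simp only [eqv_symm_succ, Matrix.fromBlocks_apply₂₂]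
            exact triT' i j (Nat.lt_of_succ_lt_succ hij)
      · intro j hm hn
        match j with
        | 0 =>
          have h0m : (⟨0, hm⟩ : Fin (m+1)) = 0 := rfl
          have h0n : (⟨0, hn⟩ : Fin (n+1)) = 0 := rfl
          rw [h0m, h0n, Matrix.submatrix_apply, Matrix.submatrix_apply]
          simp only [eqv_symm_zero, Matrix.fromBlocks_apply₁₁, Matrix.of_apply]
          exact hαβ
        | (k+1) =>
          have hm' : k < m := Nat.lt_of_succ_lt_succ hm
          have hn' : k < n := Nat.lt_of_succ_lt_succ hn
          have hsm : (⟨k+1, hm⟩ : Fin (m+1)) = Fin.succ ⟨k, hm'⟩ := rfl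
          have hsn : (⟨k+1, hn⟩ : Fin (n+1)) = Fin.succ ⟨k, hn'⟩ := rfl
          rw [hsm, hsn, Matrix.submatrix_apply, Matrix.submatrix_apply]
          simp only [eqv_symm_succ, Matrix.fromBlocks_apply₂₂]
          exact diag' k hm' hn'
end

section
/- Let m, n, p, q be natural numbers with m ≥ n. Let A be an m×n complex matrix, B an n×m complex matrix, and let H00, H01, H10, H11 be complex matrices of sizes p×p, p×q, q×p, q×q respectively. Then there exists σ : Fin n → ℂ such that the characteristic polynomial of the n×n matrix B·A equals ∏_{j : Fin n} (X − (σ j)²), and the characteristic polynomial of the (m·p+n·q)×(m·p+n·q) block matrix [[I_m ⊗ H00, A ⊗ H01], [B ⊗ H10, I_n ⊗ H11]] equals (∏_{j : Fin n} charpoly(H↑(σ j))) · (charpoly(H00))^(m−n). -/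
set_option synthInstance.maxHeartbeats 1000000
set_option maxHeartbeats 1600000

open Matrix Polynomial Finset Kronecker

theorem exists_tri : ∀ (n : ℕ) (N : Matrix (Fin n) (Fin n) ℂ),
    ∃ U V T : Matrix (Fin n) (Fin n) ℂ,
      U * V = 1 ∧ V * U = 1 ∧ N = U * T * V ∧ T.BlockTriangular id := by
  intro n
  induction n with
  | zero =>
    intro N
    exact ⟨1, 1, N, by simp, by simp, by simp, fun i j _ => i.elim0⟩
  | succ n ih =>
    intro N
    -- eigenvalue
    have hdeg : 0 < N.charpoly.degree := by
      rw [Matrix.charpoly_degree_eq_dim]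
      exact_mod_cast Fintype.card_pos
    obtain ⟨μ, hμ⟩ := Complex.exists_root hdeg
    have hdet : (μ • (1 : Matrix (Fin (n+1)) (Fin (n+1)) ℂ) - N).det = 0 := by
      have h0 : eval μ N.charpoly = 0 := hμ
      rw [show (μ • (1 : Matrix (Fin (n+1)) (Fin (n+1)) ℂ) - N) =
          (Polynomial.evalRingHom μ).mapMatrix (charmatrix N) from ?_]
      · rw [← RingHom.map_det]
        simpa [Matrix.charpoly] using h0
      · ext i j
        by_cases h : i = j <;>
          simp [h, charmatrix_apply_eq, charmatrix_apply_ne, Matrix.one_apply]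
    obtain ⟨v, hv0, hv⟩ := (Matrix.exists_mulVec_eq_zero_iff).2 hdet
    have hNv : N *ᵥ v = μ • v := by
      have h1 : (μ • (1 : Matrix (Fin (n+1)) (Fin (n+1)) ℂ)) *ᵥ v - N *ᵥ v = 0 := by
        rw [← Matrix.sub_mulVec]; exact hv
      rw [Matrix.smul_mulVec, Matrix.one_mulVec] at h1
      exact (sub_eq_zero.mp h1).symm
    obtain ⟨i₀, hi₀⟩ := Function.ne_iff.mp hv0
    have hvi₀ : v i₀ ≠ 0 := by simpa using hi₀
    set e : Fin (n+1) → ℂ := Pi.single i₀ 1 with he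
    set U₀ : Matrix (Fin (n+1)) (Fin (n+1)) ℂ :=
      1 + Matrix.replicateCol Unit (v - e) * Matrix.replicateRow Unit e with hU₀
    have hU₀det : U₀.det = v i₀ := by
      rw [hU₀, Matrix.det_one_add_replicateCol_mul_replicateRow]
      simp [he, dotProduct, Pi.single_apply]
    have hU₀unit : IsUnit U₀.det := by rw [hU₀det]; exact Ne.isUnit hvi₀
    have hU₀e : U₀ *ᵥ e = v := by
      rw [hU₀, Matrix.add_mulVec, Matrix.one_mulVec, ← Matrix.mulVec_mulVec]
      have : Matrix.replicateRow Unit e *ᵥ e = fun _ => 1 := by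
        funext u
        simp [Matrix.replicateRow, Matrix.mulVec, dotProduct, he, Pi.single_apply]
      rw [this]
      funext i
      simp [Matrix.replicateCol, Matrix.mulVec, dotProduct]

    set V₀ := U₀⁻¹ with hV₀
    have hUV : U₀ * V₀ = 1 := Matrix.mul_nonsing_inv _ hU₀unit
    have hVU : V₀ * U₀ = 1 := Matrix.nonsing_inv_mul _ hU₀unit
    set M1 := V₀ * N * U₀ with hM1
    have hM1e : M1 *ᵥ e = μ • e := by
      have hV₀v : V₀ *ᵥ v = e := by
        rw [← hU₀e, Matrix.mulVec_mulVec, hVU, Matrix.one_mulVec]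
      rw [hM1, ← Matrix.mulVec_mulVec, ← Matrix.mulVec_mulVec, hU₀e, hNv,
        Matrix.mulVec_smul, hV₀v]
    have hM1col : ∀ i, M1 i i₀ = if i = i₀ then μ else 0 := by
      intro i
      have h := congrFun hM1e i
      rw [he] at h
      simp only [Matrix.mulVec_single, mul_one, Pi.smul_apply, Pi.single_apply,
        smul_eq_mul, MulOpposite.op_one, one_smul, Matrix.col_apply] at h
      rw [h]
      by_cases hii : i = i₀ <;> simp [hii]
    set π : Equiv.Perm (Fin (n+1)) := Equiv.swap 0 i₀ with hπdef
    set E : Matrix (Fin (n+1)) (Fin (n+1)) ℂ :=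
      (1 : Matrix (Fin (n+1)) (Fin (n+1)) ℂ).submatrix ⇑π ⇑(Equiv.refl (Fin (n+1))) with hE
    set E' : Matrix (Fin (n+1)) (Fin (n+1)) ℂ :=
      (1 : Matrix (Fin (n+1)) (Fin (n+1)) ℂ).submatrix ⇑(Equiv.refl (Fin (n+1))) ⇑π with hE'
    have hEE' : E * E' = 1 := by
      rw [hE, hE', Matrix.one_submatrix_mul, Matrix.submatrix_submatrix]
      simp [Matrix.submatrix_one_equiv]
    have hE'E : E' * E = 1 := by
      rw [hE', hE, Matrix.one_submatrix_mul, Matrix.submatrix_submatrix]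
      simp
    set M2 := M1.submatrix ⇑π ⇑π with hM2def
    have hM2eq : M2 = E * M1 * E' := by
      rw [hE, hE', Matrix.one_submatrix_mul, Matrix.mul_submatrix_one]
      simp [hM2def, Matrix.submatrix_submatrix]
    have hM2col : ∀ i, M2 i 0 = if i = 0 then μ else 0 := by
      intro i
      have hπ0 : π 0 = i₀ := Equiv.swap_apply_left 0 i₀
      show M1 (π i) (π 0) = _
      rw [hπ0, hM1col (π i)]
      by_cases hi : i = 0
      · simp [hi, hπ0]
      · rw [if_neg, if_neg hi]
        intro hcc
        exact hi (π.injective (by rw [hcc, hπ0]))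
    set eqv : (Fin 1 ⊕ Fin n) ≃ Fin (n+1) :=
      finSumFinEquiv.trans (finCongr (Nat.add_comm 1 n)) with heqv
    have heq0 : eqv (Sum.inl 0) = 0 := by
      apply Fin.ext
      simp [heqv]
    have heqr : ∀ j : Fin n, ((eqv (Sum.inr j) : Fin (n+1)) : ℕ) = 1 + (j : ℕ) := by
      intro j
      simp [heqv]
      omega
    set M2' := M2.submatrix ⇑eqv ⇑eqv with hM2'def
    have hM2'col : ∀ x, M2' x (Sum.inl 0) = if x = Sum.inl 0 then μ else 0 := by
      intro x
      rw [hM2'def, Matrix.submatrix_apply, heq0, hM2col]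
      by_cases hx : x = Sum.inl 0
      · simp [hx, heq0]
      · rw [if_neg, if_neg hx]
        intro hcc
        exact hx (eqv.injective (by rw [hcc, heq0]))
    set M3 : Matrix (Fin n) (Fin n) ℂ := Matrix.of fun i j => M2' (Sum.inr i) (Sum.inr j)
      with hM3
    set rr : Matrix (Fin 1) (Fin n) ℂ := Matrix.of fun _ j => M2' (Sum.inl 0) (Sum.inr j)
      with hrr
    set L : Matrix (Fin 1) (Fin 1) ℂ := Matrix.of fun _ _ => μ with hL
    have hsplit : M2' = fromBlocks L rr 0 M3 := by
      ext x y
      rcases x with a | i <;> rcases y with b | j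
      · have ha : a = 0 := Subsingleton.elim _ _
        have hb : b = 0 := Subsingleton.elim _ _
        subst ha; subst hb
        rw [hM2'col]
        simp [hL]
      · have ha : a = 0 := Subsingleton.elim _ _
        subst ha
        rfl
      · have hb : b = 0 := Subsingleton.elim _ _
        subst hb
        rw [hM2'col]
        simp
      · rfl
    obtain ⟨U₃, V₃, T₃, h31, h32, h33, h34⟩ := ih M3
    set Ub := fromBlocks (1 : Matrix (Fin 1) (Fin 1) ℂ) 0 0 U₃ with hUb
    set Vb := fromBlocks (1 : Matrix (Fin 1) (Fin 1) ℂ) 0 0 V₃ with hVb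
    set Tb := fromBlocks L (rr * U₃) 0 T₃ with hTb
    have hUbVb : Ub * Vb = 1 := by
      rw [hUb, hVb, Matrix.fromBlocks_multiply]
      simp [h31, Matrix.fromBlocks_one]
    have hVbUb : Vb * Ub = 1 := by
      rw [hVb, hUb, Matrix.fromBlocks_multiply]
      simp [h32, Matrix.fromBlocks_one]
    have hM2'UTV : M2' = Ub * Tb * Vb := by
      rw [hsplit, hUb, hTb, hVb, Matrix.fromBlocks_multiply, Matrix.fromBlocks_multiply]
      simp only [Matrix.one_mul, Matrix.mul_one, Matrix.mul_zero, Matrix.zero_mul,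
        add_zero, zero_add, Matrix.mul_assoc, h31, ← Matrix.mul_assoc]
      rw [show rr * U₃ * V₃ = rr * (U₃ * V₃) from Matrix.mul_assoc _ _ _, h31,
        Matrix.mul_one, show U₃ * T₃ * V₃ = U₃ * T₃ * V₃ from rfl, ← h33]
    -- transport back
    have hsubmul : ∀ (X Y : Matrix (Fin 1 ⊕ Fin n) (Fin 1 ⊕ Fin n) ℂ),
        (X.submatrix ⇑eqv.symm ⇑eqv.symm) * (Y.submatrix ⇑eqv.symm ⇑eqv.symm)
          = (X*Y).submatrix ⇑eqv.symm ⇑eqv.symm := fun X Y =>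
      Matrix.submatrix_mul_equiv X Y _ eqv.symm _
    have hM2back : M2 = M2'.submatrix ⇑eqv.symm ⇑eqv.symm := by
      rw [hM2'def, Matrix.submatrix_submatrix]
      simp
    refine ⟨U₀ * E' * Ub.submatrix ⇑eqv.symm ⇑eqv.symm,
      Vb.submatrix ⇑eqv.symm ⇑eqv.symm * E * V₀,
      Tb.submatrix ⇑eqv.symm ⇑eqv.symm, ?_, ?_, ?_, ?_⟩
    · calc U₀ * E' * Ub.submatrix ⇑eqv.symm ⇑eqv.symm *
          (Vb.submatrix ⇑eqv.symm ⇑eqv.symm * E * V₀)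
          = U₀ * E' * (Ub.submatrix ⇑eqv.symm ⇑eqv.symm *
            Vb.submatrix ⇑eqv.symm ⇑eqv.symm) * E * V₀ := by
            simp only [Matrix.mul_assoc]
      _ = U₀ * E' * E * V₀ := by
            rw [hsubmul, hUbVb, Matrix.submatrix_one_equiv, Matrix.mul_one]
      _ = 1 := by rw [Matrix.mul_assoc U₀ E' E, hE'E, Matrix.mul_one, hUV]
    · calc Vb.submatrix ⇑eqv.symm ⇑eqv.symm * E * V₀ *
          (U₀ * E' * Ub.submatrix ⇑eqv.symm ⇑eqv.symm)
          = Vb.submatrix ⇑eqv.symm ⇑eqv.symm * (E * (V₀ * U₀) * E') *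
            Ub.submatrix ⇑eqv.symm ⇑eqv.symm := by simp only [Matrix.mul_assoc]
      _ = Vb.submatrix ⇑eqv.symm ⇑eqv.symm * Ub.submatrix ⇑eqv.symm ⇑eqv.symm := by
            rw [hVU, Matrix.mul_one, hEE', Matrix.mul_one]
      _ = 1 := by rw [hsubmul, hVbUb, Matrix.submatrix_one_equiv]
    · calc N = (U₀ * V₀) * N * (U₀ * V₀) := by rw [hUV]; simp
      _ = U₀ * M1 * V₀ := by rw [hM1]; simp only [Matrix.mul_assoc]
      _ = U₀ * (E' * M2 * E) * V₀ := by
            rw [hM2eq]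
            rw [show E' * (E * M1 * E') * E
              = (E' * E) * M1 * (E' * E) from by simp only [Matrix.mul_assoc],
              hE'E, Matrix.one_mul, Matrix.mul_one]
      _ = U₀ * (E' * (M2'.submatrix ⇑eqv.symm ⇑eqv.symm) * E) * V₀ := by rw [← hM2back]
      _ = U₀ * E' * Ub.submatrix ⇑eqv.symm ⇑eqv.symm *
          Tb.submatrix ⇑eqv.symm ⇑eqv.symm *
          (Vb.submatrix ⇑eqv.symm ⇑eqv.symm * E * V₀) := by
            rw [hM2'UTV, ← hsubmul, ← hsubmul]
            simp only [Matrix.mul_assoc]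
    · intro i j hlt
      show Tb (eqv.symm i) (eqv.symm j) = 0
      rcases h1 : eqv.symm i with a | i' <;> rcases h2 : eqv.symm j with b | j'
      · have ha : a = 0 := Subsingleton.elim _ _
        subst ha
        have : i = 0 := by rw [Equiv.symm_apply_eq] at h1; rw [h1, heq0]
        rw [this] at hlt
        exact absurd hlt (Fin.not_lt_zero _)
      · have ha : a = 0 := Subsingleton.elim _ _
        subst ha
        have : i = 0 := by rw [Equiv.symm_apply_eq] at h1; rw [h1, heq0]
        rw [this] at hlt
        exact absurd hlt (Fin.not_lt_zero _)
      · rfl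
      · show T₃ i' j' = 0
        apply h34
        rw [Equiv.symm_apply_eq] at h1 h2
        have hi' : (i : ℕ) = 1 + (i' : ℕ) := by rw [h1]; exact heqr i'
        have hj' : (j : ℕ) = 1 + (j' : ℕ) := by rw [h2]; exact heqr j'
        have : (j : ℕ) < (i : ℕ) := hlt
        show j' < i'
        rw [Fin.lt_iff_val_lt_val]
        omega

theorem det_blockTri {K : Type*} [Field K] {n p : ℕ}
    (G : Matrix (Fin n × Fin p) (Fin n × Fin p) K)
    (h : ∀ k l i j, l < k → G (k,i) (l,j) = 0) :
    G.det = ∏ k : Fin n, (Matrix.of fun i j => G (k,i) (k,j)).det := by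
  have hbt : G.BlockTriangular Prod.fst := fun x y hxy =>
    h x.1 y.1 x.2 y.2 hxy
  rw [hbt.det_fintype]
  refine Finset.prod_congr rfl fun k _ => ?_
  let e : Fin p ≃ {x : Fin n × Fin p // x.1 = k} :=
    { toFun := fun i => ⟨(k,i), rfl⟩
      invFun := fun x => x.1.2
      left_inv := fun i => rfl
      right_inv := fun x => by
        rcases x with ⟨⟨a,b⟩, hx⟩
        simp only at hx
        subst hx
        rfl }
  rw [← Matrix.det_submatrix_equiv_self e]
  rfl

theorem det_one_kron_sub {K : Type*} [Field K] {n p : ℕ} (φ : ℂ →+* K)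
    (N : Matrix (Fin n) (Fin n) ℂ) (μ : Fin n → ℂ)
    (hμ : N.charpoly = ∏ j, (X - C (μ j)))
    (M W : Matrix (Fin p) (Fin p) K) :
    (1 ⊗ₖ M - (N.map φ) ⊗ₖ W).det = ∏ j, (M - φ (μ j) • W).det := by
  obtain ⟨U, V, T, hUV, hVU, hN, hT⟩ := exists_tri n N
  -- mapped versions
  have hUV' : U.map φ * V.map φ = 1 := by
    rw [← Matrix.map_mul, hUV, Matrix.map_one φ (map_zero φ) (map_one φ)]
  have hVU' : V.map φ * U.map φ = 1 := by
    rw [← Matrix.map_mul, hVU, Matrix.map_one φ (map_zero φ) (map_one φ)]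
  have hN' : N.map φ = U.map φ * T.map φ * V.map φ := by
    rw [hN, Matrix.map_mul, Matrix.map_mul]
  -- step b: conjugation
  have key : (U.map φ ⊗ₖ (1 : Matrix (Fin p) (Fin p) K)) *
      ((1 : Matrix (Fin n) (Fin n) K) ⊗ₖ M - (T.map φ) ⊗ₖ W) *
      (V.map φ ⊗ₖ (1 : Matrix (Fin p) (Fin p) K)) =
      1 ⊗ₖ M - (N.map φ) ⊗ₖ W := by
    rw [Matrix.mul_sub, Matrix.sub_mul, ← Matrix.mul_kronecker_mul, ← Matrix.mul_kronecker_mul,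
      ← Matrix.mul_kronecker_mul, ← Matrix.mul_kronecker_mul, hN']
    rw [Matrix.mul_one, Matrix.one_mul, Matrix.mul_one, Matrix.one_mul, hUV',
      Matrix.mul_assoc (U.map ⇑φ) (T.map ⇑φ) (V.map ⇑φ), Matrix.mul_one W]
  have hdetUVkron : ((U.map φ) ⊗ₖ (1 : Matrix (Fin p) (Fin p) K)).det *
      ((V.map φ) ⊗ₖ (1 : Matrix (Fin p) (Fin p) K)).det = 1 := by
    rw [← Matrix.det_mul, ← Matrix.mul_kronecker_mul, hUV', Matrix.mul_one,
      Matrix.one_kronecker_one, Matrix.det_one]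
  have hdet1 : (1 ⊗ₖ M - (N.map φ) ⊗ₖ W).det =
      ((1 : Matrix (Fin n) (Fin n) K) ⊗ₖ M - (T.map φ) ⊗ₖ W).det := by
    rw [← key, Matrix.det_mul, Matrix.det_mul]
    rw [mul_comm (((U.map φ) ⊗ₖ (1 : Matrix (Fin p) (Fin p) K)).det) _, mul_assoc,
      hdetUVkron, mul_one]
  -- step c: block triangular determinant
  have hdet2 : ((1 : Matrix (Fin n) (Fin n) K) ⊗ₖ M - (T.map φ) ⊗ₖ W).det =
      ∏ k : Fin n, (M - φ (T k k) • W).det := by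
    rw [det_blockTri]
    · refine Finset.prod_congr rfl fun k _ => ?_
      congr 1
      ext i j
      simp [Matrix.kroneckerMap_apply, Matrix.one_apply, Matrix.smul_apply]
    · intro k l i j hlk
      have h1 : (1 : Matrix (Fin n) (Fin n) K) k l = 0 :=
        Matrix.one_apply_ne (ne_of_gt hlk)
      have h2 : T k l = 0 := hT hlk
      simp [Matrix.kroneckerMap_apply, h1, h2]
  -- step d: identify diagonal with μ as a multiset
  have hcpT : N.charpoly = ∏ k : Fin n, (X - C (T k k)) := by
    have hcomm : ∀ (S : Matrix (Fin n) (Fin n) ℂ[X]),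
        S * Matrix.scalar (Fin n) (X : ℂ[X]) = Matrix.scalar (Fin n) (X : ℂ[X]) * S :=
      fun S => (Matrix.scalar_commute (X : ℂ[X]) (fun r' => Commute.all _ _) S).symm
    have hsim : charmatrix N = U.map C * charmatrix T * V.map C := by
      have hsc : ∀ (S : Matrix (Fin n) (Fin n) ℂ), charmatrix S
          = Matrix.scalar (Fin n) (X : ℂ[X]) - S.map C := fun S => rfl
      rw [hsc, hsc, Matrix.mul_sub, Matrix.sub_mul, ← Matrix.map_mul, ← Matrix.map_mul, hN]
      congr 1
      rw [hcomm, Matrix.mul_assoc, ← Matrix.map_mul, hUV,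
        Matrix.map_one C C_0 C_1, Matrix.mul_one]
    have hUVC : (U.map C) * (V.map C) = (1 : Matrix (Fin n) (Fin n) ℂ[X]) := by
      rw [← Matrix.map_mul, hUV, Matrix.map_one C C_0 C_1]
    have : N.charpoly = T.charpoly := by
      rw [Matrix.charpoly, Matrix.charpoly, hsim, Matrix.det_mul, Matrix.det_mul]
      rw [mul_comm ((U.map C).det) _, mul_assoc, ← Matrix.det_mul, hUVC, Matrix.det_one,
        mul_one]
    rw [this, Matrix.charpoly_of_upperTriangular T hT]
  have hmultiset : Multiset.map (fun k => T k k) Finset.univ.val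
      = Multiset.map μ Finset.univ.val := by
    have h1 : ((Multiset.map (fun k => T k k) Finset.univ.val).map
        (fun a : ℂ => X - C a)).prod
        = ((Multiset.map μ Finset.univ.val).map (fun a : ℂ => X - C a)).prod := by
      rw [Multiset.map_map, Multiset.map_map]
      rw [show ((Finset.univ.val.map ((fun a : ℂ => X - C a) ∘ fun k => T k k)).prod)
        = ∏ k : Fin n, (X - C (T k k)) from rfl]
      rw [show ((Finset.univ.val.map ((fun a : ℂ => X - C a) ∘ μ)).prod)
        = ∏ j : Fin n, (X - C (μ j)) from rfl]
      rw [← hcpT, ← hμ]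
    have := congrArg Polynomial.roots h1
    rwa [Polynomial.roots_multiset_prod_X_sub_C, Polynomial.roots_multiset_prod_X_sub_C]
      at this
  rw [hdet1, hdet2]
  have : ∀ (s : Multiset ℂ), (s.map (fun a : ℂ => (M - φ a • W).det)).prod
      = (s.map (fun a : ℂ => (M - φ a • W).det)).prod := fun _ => rfl
  calc (∏ k : Fin n, (M - φ (T k k) • W).det)
      = ((Multiset.map (fun k => T k k) Finset.univ.val).map
          (fun a : ℂ => (M - φ a • W).det)).prod := by
        rw [Multiset.map_map]; rfl
    _ = ((Multiset.map μ Finset.univ.val).map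
          (fun a : ℂ => (M - φ a • W).det)).prod := by rw [hmultiset]
    _ = ∏ j : Fin n, (M - φ (μ j) • W).det := by
        rw [Multiset.map_map]; rfl

theorem exists_sigma (n : ℕ) (Mt : Matrix (Fin n) (Fin n) ℂ) :
    ∃ σ : Fin n → ℂ, Mt.charpoly = ∏ j : Fin n, (X - C (σ j ^ 2)) := by
  have hmon := Mt.charpoly_monic
  have hsp : Mt.charpoly.Splits := IsAlgClosed.splits _
  have hcard : Mt.charpoly.roots.card = n := by
    rw [Polynomial.splits_iff_card_roots.mp hsp, Matrix.charpoly_natDegree_eq_dim,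
      Fintype.card_fin]
  set l := Mt.charpoly.roots.toList with hl
  have hlen : l.length = n := by rw [hl, Multiset.length_toList, hcard]
  have hfact : Mt.charpoly = (Mt.charpoly.roots.map fun a => X - C a).prod :=
    hsp.eq_prod_roots_of_monic hmon
  have hfact2 : Mt.charpoly = ∏ j : Fin n, (X - C (l.get (Fin.cast hlen.symm j))) := by
    conv_lhs => rw [hfact, ← Multiset.coe_toList Mt.charpoly.roots]
    rw [← hl, Multiset.map_coe, Multiset.prod_coe]
    have h2 : l.map (fun a => X - C a) = List.ofFn ((fun a => X - C a) ∘ l.get) := by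
      rw [← List.map_ofFn, List.ofFn_get]
    rw [h2, List.prod_ofFn]
    exact (Fin.prod_congr' _ hlen.symm).symm
  choose σ hσ using fun j =>
    IsAlgClosed.exists_pow_nat_eq (k := ℂ) (l.get (Fin.cast hlen.symm j)) zero_lt_two
  refine ⟨σ, ?_⟩
  rw [hfact2]
  exact (Finset.prod_congr rfl fun j _ => by rw [hσ j]).symm

section Helpers
variable {K : Type*} [Field K] (φ : Polynomial ℂ →+* K)

theorem cm_det {ι : Type*} [Fintype ι] [DecidableEq ι] (S : Matrix ι ι ℂ) :
    ((charmatrix S).map ⇑φ).det = φ S.charpoly := by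
  rw [Matrix.charpoly, RingHom.map_det]
  rfl

theorem cm_ne (hφ : Function.Injective ⇑φ) {ι : Type*} [Fintype ι] [DecidableEq ι]
    (S : Matrix ι ι ℂ) : ((charmatrix S).map ⇑φ).det ≠ 0 := by
  rw [cm_det]
  intro h
  exact S.charpoly_monic.ne_zero (hφ (by rwa [map_zero]))

theorem map_kron (ψ : ℂ →+* K) {ι κ ι' κ' : Type*} (A : Matrix ι κ ℂ) (B : Matrix ι' κ' ℂ) :
    (A ⊗ₖ B).map ⇑ψ = (A.map ⇑ψ) ⊗ₖ (B.map ⇑ψ) := by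
  ext ⟨k, i⟩ ⟨l, j⟩
  simp [Matrix.kroneckerMap_apply]

theorem cm_kron {ι κ : Type*} [Fintype ι] [DecidableEq ι] [Fintype κ] [DecidableEq κ]
    (S : Matrix κ κ ℂ) :
    (charmatrix ((1 : Matrix ι ι ℂ) ⊗ₖ S)).map ⇑φ
      = (1 : Matrix ι ι K) ⊗ₖ ((charmatrix S).map ⇑φ) := by
  ext ⟨k, i⟩ ⟨l, j⟩
  by_cases hkl : k = l
  · subst hkl
    by_cases hij : i = j
    · subst hij
      simp [Matrix.kroneckerMap_apply, Matrix.one_apply]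
    · rw [Matrix.map_apply, charmatrix_apply_ne _ _ _ (by simp [Prod.ext_iff, hij])]
      simp [Matrix.kroneckerMap_apply, Matrix.one_apply, charmatrix_apply_ne _ _ _ hij]
  · rw [Matrix.map_apply, charmatrix_apply_ne _ _ _ (by simp [Prod.ext_iff, hkl])]
    simp [Matrix.kroneckerMap_apply, Matrix.one_apply, hkl]

end Helpers

theorem stmt3 (m n p q : ℕ) (hmn : m ≥ n)
    (A : Matrix (Fin m) (Fin n) ℂ) (B : Matrix (Fin n) (Fin m) ℂ)
    (H00 : Matrix (Fin p) (Fin p) ℂ) (H01 : Matrix (Fin p) (Fin q) ℂ)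
    (H10 : Matrix (Fin q) (Fin p) ℂ) (H11 : Matrix (Fin q) (Fin q) ℂ) :
    ∃ σ : Fin n → ℂ,
      (B * A).charpoly = ∏ j : Fin n, (X - C (σ j ^ 2)) ∧
      (Matrix.fromBlocks ((1 : Matrix (Fin m) (Fin m) ℂ) ⊗ₖ H00) (A ⊗ₖ H01)
          (B ⊗ₖ H10) ((1 : Matrix (Fin n) (Fin n) ℂ) ⊗ₖ H11)).charpoly =
        (∏ j : Fin n,
          (Matrix.fromBlocks H00 (σ j • H01) (σ j • H10) H11).charpoly) *
          H00.charpoly ^ (m - n) := by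
  obtain ⟨σ, hσ⟩ := exists_sigma n (B * A)
  refine ⟨σ, hσ, ?_⟩
  set φ : Polynomial ℂ →+* RatFunc ℂ := algebraMap (Polynomial ℂ) (RatFunc ℂ) with hφdef
  have hφ : Function.Injective ⇑φ := IsFractionRing.injective _ _
  set ψ : ℂ →+* RatFunc ℂ := φ.comp (C : ℂ →+* Polynomial ℂ) with hψdef
  apply hφ
  set cm00 : Matrix (Fin p) (Fin p) (RatFunc ℂ) := (charmatrix H00).map ⇑φ with hcm00
  set cm11 : Matrix (Fin q) (Fin q) (RatFunc ℂ) := (charmatrix H11).map ⇑φ with hcm11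
  set W : Matrix (Fin q) (Fin q) (RatFunc ℂ) := (H10.map ⇑ψ) * cm00⁻¹ * (H01.map ⇑ψ) with hW
  haveI hinv00 : Invertible cm00 :=
    Matrix.invertibleOfIsUnitDet _ (isUnit_iff_ne_zero.2 (cm_ne φ hφ H00))
  have hmapneg : ∀ {ι κ : Type} (N : Matrix ι κ (Polynomial ℂ)),
      (-N).map ⇑φ = -(N.map ⇑φ) := by
    intro ι κ N; ext i j; simp
  have hmapCψ : ∀ {ι κ : Type} (N : Matrix ι κ ℂ),
      (N.map ⇑(C : ℂ →+* Polynomial ℂ)).map ⇑φ = N.map ⇑ψ := by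
    intro ι κ N; ext i j; simp [hψdef]
  have hdet1kron : ((1 : Matrix (Fin m) (Fin m) (RatFunc ℂ)) ⊗ₖ cm00).det
      = (φ H00.charpoly) ^ m := by
    rw [Matrix.det_kronecker, Matrix.det_one, one_pow, cm_det, Fintype.card_fin, one_mul]
  haveI hinvkron : Invertible ((1 : Matrix (Fin m) (Fin m) (RatFunc ℂ)) ⊗ₖ cm00) :=
    Matrix.invertibleOfIsUnitDet _ (isUnit_iff_ne_zero.2 (by
      rw [hdet1kron]
      exact pow_ne_zero _ (fun h => H00.charpoly_monic.ne_zero (hφ (by rwa [map_zero])))))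
  -- LHS
  have hLHS : φ (Matrix.fromBlocks ((1 : Matrix (Fin m) (Fin m) ℂ) ⊗ₖ H00) (A ⊗ₖ H01)
      (B ⊗ₖ H10) ((1 : Matrix (Fin n) (Fin n) ℂ) ⊗ₖ H11)).charpoly
      = (φ H00.charpoly) ^ m * ∏ j : Fin n, (cm11 - ψ (σ j ^ 2) • W).det := by
    rw [← cm_det φ, charmatrix_fromBlocks, Matrix.fromBlocks_map, cm_kron, cm_kron,
      hmapneg, hmapneg, hmapCψ, hmapCψ, map_kron, map_kron]
    rw [Matrix.det_fromBlocks₁₁, hdet1kron]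
    congr 1
    simp only [Matrix.neg_mul, Matrix.mul_neg, neg_neg, Matrix.invOf_eq_nonsing_inv]
    rw [Matrix.inv_kronecker, inv_one]
    rw [← Matrix.mul_kronecker_mul, ← Matrix.mul_kronecker_mul, Matrix.mul_one,
      ← Matrix.map_mul]
    rw [det_one_kron_sub ψ (B * A) (fun j => σ j ^ 2) hσ cm11 W]
  -- RHS, factor by factor
  have hsmallmap : ∀ (z : ℂ) (N : Matrix (Fin q) (Fin p) ℂ),
      ((z • N).map ⇑(C : ℂ →+* Polynomial ℂ)).map ⇑φ = ψ z • (N.map ⇑ψ) := by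
    intro z N; ext i j; simp [hψdef, Matrix.smul_apply, smul_eq_mul]
  have hsmallmap' : ∀ (z : ℂ) (N : Matrix (Fin p) (Fin q) ℂ),
      ((z • N).map ⇑(C : ℂ →+* Polynomial ℂ)).map ⇑φ = ψ z • (N.map ⇑ψ) := by
    intro z N; ext i j; simp [hψdef, Matrix.smul_apply, smul_eq_mul]
  have hRHS : ∀ j : Fin n,
      φ (Matrix.fromBlocks H00 (σ j • H01) (σ j • H10) H11).charpoly
      = φ H00.charpoly * (cm11 - ψ (σ j ^ 2) • W).det := by
    intro j
    rw [← cm_det φ, charmatrix_fromBlocks, Matrix.fromBlocks_map,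
      hmapneg, hmapneg, hsmallmap, hsmallmap']
    rw [Matrix.det_fromBlocks₁₁, cm_det]
    congr 2
    simp only [Matrix.neg_mul, Matrix.mul_neg, neg_neg, Matrix.invOf_eq_nonsing_inv]
    rw [Matrix.smul_mul, Matrix.smul_mul, Matrix.mul_smul, smul_smul, hW]
    rw [← _root_.map_mul, ← sq, _root_.map_pow]
  calc φ (Matrix.fromBlocks ((1 : Matrix (Fin m) (Fin m) ℂ) ⊗ₖ H00) (A ⊗ₖ H01)
      (B ⊗ₖ H10) ((1 : Matrix (Fin n) (Fin n) ℂ) ⊗ₖ H11)).charpoly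
      = (φ H00.charpoly) ^ m * ∏ j : Fin n, (cm11 - ψ (σ j ^ 2) • W).det := hLHS
    _ = (φ H00.charpoly) ^ n * (φ H00.charpoly) ^ (m - n) *
        ∏ j : Fin n, (cm11 - ψ (σ j ^ 2) • W).det := by
        rw [← pow_add, Nat.add_sub_cancel' hmn]
    _ = (∏ j : Fin n, φ H00.charpoly * (cm11 - ψ (σ j ^ 2) • W).det) *
        (φ H00.charpoly) ^ (m - n) := by
        rw [Finset.prod_mul_distrib, Finset.prod_const, Finset.card_univ, Fintype.card_fin]
        ring
    _ = φ ((∏ j : Fin n,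
          (Matrix.fromBlocks H00 (σ j • H01) (σ j • H10) H11).charpoly) *
          H00.charpoly ^ (m - n)) := by
        rw [_root_.map_mul, _root_.map_pow, _root_.map_prod]
        congr 1
        exact Finset.prod_congr rfl fun j _ => (hRHS j).symm
end

section
/- Let m, n, p, q be natural numbers with m ≤ n. Let A be an m×n complex matrix, B an n×m complex matrix, and let H00, H01, H10, H11 be complex matrices of sizes p×p, p×q, q×p, q×q respectively. Then there exists σ : Fin m → ℂ such that the characteristic polynomial of the m×m matrix A·B equals ∏_{j : Fin m} (X − (σ j)²), and the characteristic polynomial of the (m·p+n·q)×(m·p+n·q) block matrix [[I_m ⊗ H00, A ⊗ H01], [B ⊗ H10, I_n ⊗ H11]] equals (∏_{j : Fin m} charpoly(H↑(σ j))) · (charpoly(H11))^(n−m). -/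
/-!
Over the field of rational functions, take Schur complements with respect to the invertible
blocks `X - 1 ⊗ H11` and `X - H11`. With `N = H01 (X - H11)⁻¹ H10`, the characteristic polynomial
of the big matrix becomes `χ(H11)ⁿ · det (1 ⊗ (X - H00) - AB ⊗ N)`, and that of `H↑σ` becomes
`χ(H11) · det ((X - H00) - σ² N)`. Triangularizing `AB = U T U⁻¹` over `ℂ` makes
`1 ⊗ (X - H00) - T ⊗ N` block upper triangular with diagonal blocks `(X - H00) - T_jj N`, so
square roots `σ_j` of the eigenvalues `T_jj` of `AB` match the two sides.
-/

open Matrix Polynomial Kronecker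

namespace Matrix

section Triangularization

variable {K : Type*} [Field K] {k : ℕ}

theorem exists_isUnit_det_row_last_eq {v : Fin (k + 1) → K} (hv : v ≠ 0) :
    ∃ P : Matrix (Fin (k + 1)) (Fin (k + 1)) K, IsUnit P.det ∧ P (Fin.last k) = v := by
  obtain ⟨i, hi⟩ := Function.ne_iff.mp hv
  refine ⟨((1 : Matrix _ _ K).updateCol i v)ᵀ.submatrix (Equiv.swap i (Fin.last k)) id, ?_, ?_⟩
  · rw [det_permute, det_transpose, ← cramer_apply, cramer_one, Module.End.one_apply]
    exact ((Units.isUnit _).map (Int.castRingHom K)).mul (isUnit_iff_ne_zero.2 hi)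
  · ext j; simp

theorem exists_conj_row_last_eq_single [IsAlgClosed K] (M : Matrix (Fin (k + 1)) (Fin (k + 1)) K) :
    ∃ (P : Matrix (Fin (k + 1)) (Fin (k + 1)) K) (μ : K),
      IsUnit P.det ∧ (P * M * P⁻¹) (Fin.last k) = Pi.single (Fin.last k) μ := by
  obtain ⟨μ, hμ⟩ := Module.End.exists_eigenvalue (toLin' Mᵀ)
  obtain ⟨v, hv⟩ := hμ.exists_hasEigenvector
  -- the last row of `P` is a left eigenvector of `M`
  obtain ⟨P, hP, hPv⟩ := exists_isUnit_det_row_last_eq hv.2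
  have hvM : v ᵥ* M = μ • v := by rw [← mulVec_transpose]; exact hv.apply_eq_smul
  have hvP : v ᵥ* P⁻¹ = Pi.single (Fin.last k) 1 := by
    have : Pi.single (Fin.last k) 1 ᵥ* P = v := by rw [single_one_vecMul]; exact hPv
    rw [← this, vecMul_vecMul, mul_nonsing_inv _ hP, vecMul_one]
  refine ⟨P, μ, hP, ?_⟩
  rw [mul_apply_eq_vecMul, mul_apply_eq_vecMul, hPv, hvM, smul_vecMul, hvP, ← Pi.single_smul,
    smul_eq_mul, mul_one]

theorem isUpperTriangular_reindex_fromBlocks {R : Type*} [Zero R] {m n : ℕ}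
    {A : Matrix (Fin m) (Fin m) R} {D : Matrix (Fin n) (Fin n) R} (hA : A.IsUpperTriangular)
    (hD : D.IsUpperTriangular) (B : Matrix (Fin m) (Fin n) R) :
    (reindex finSumFinEquiv finSumFinEquiv (fromBlocks A B 0 D)).IsUpperTriangular := by
  rw [IsUpperTriangular, blockTriangular_reindex_iff]
  rintro (i | i) (j | j) h
  · exact hA ((Fin.strictMono_castAdd n).lt_iff_lt.mp h)
  · simp [Fin.lt_def] at h
    omega
  · rfl
  · exact hD ((Fin.natAdd_lt_natAdd_iff m).mp h)

theorem exists_isUpperTriangular_conj [IsAlgClosed K] :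
    ∀ {k : ℕ} (M : Matrix (Fin k) (Fin k) K),
      ∃ U W T : Matrix (Fin k) (Fin k) K, U * W = 1 ∧ T.IsUpperTriangular ∧ M = U * T * W
  | 0, M => ⟨1, 1, M, one_mul 1, fun i => i.elim0, by simp⟩
  | k + 1, M => by
    obtain ⟨P, μ, hP, hrow⟩ := exists_conj_row_last_eq_single M
    let e : Fin k ⊕ Fin 1 ≃ Fin (k + 1) := finSumFinEquiv
    let ι := reindexAlgEquiv K K e
    set Q := ι.symm (P * M * P⁻¹) with hQ
    have hQ₂₁ : Q.toBlocks₂₁ = 0 := by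
      ext i j
      have hlast : Fin.natAdd k i = Fin.last k := by rw [Subsingleton.elim i 0]; rfl
      simp only [hQ, ι, e, toBlocks₂₁, symm_reindexAlgEquiv, coe_reindexAlgEquiv, reindex_apply,
        submatrix_apply, of_apply, Equiv.symm_symm, finSumFinEquiv_apply_left,
        finSumFinEquiv_apply_right, hlast, hrow, zero_apply]
      exact Pi.single_eq_of_ne (Fin.castSucc_lt_last j).ne _
    obtain ⟨U, W, T, hUW, hT, hQ₁₁⟩ := exists_isUpperTriangular_conj Q.toBlocks₁₁
    have hQ' : fromBlocks U 0 0 1 * fromBlocks T (W * Q.toBlocks₁₂) 0 Q.toBlocks₂₂ *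
        fromBlocks W 0 0 1 = Q := by
      conv_rhs => rw [← fromBlocks_toBlocks Q, hQ₂₁, hQ₁₁]
      simp [fromBlocks_multiply, ← Matrix.mul_assoc, hUW]
    refine ⟨P⁻¹ * ι (fromBlocks U 0 0 1), ι (fromBlocks W 0 0 1) * P,
      ι (fromBlocks T (W * Q.toBlocks₁₂) 0 Q.toBlocks₂₂), ?_,
      isUpperTriangular_reindex_fromBlocks hT
        (fun _ _ h => (h.ne (Subsingleton.elim _ _)).elim) _, ?_⟩
    · calc P⁻¹ * ι (fromBlocks U 0 0 1) * (ι (fromBlocks W 0 0 1) * P)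
          = P⁻¹ * ι (fromBlocks U 0 0 1 * fromBlocks W 0 0 1) * P := by
            simp only [map_mul, Matrix.mul_assoc]
        _ = 1 := by simp [fromBlocks_multiply, hUW, nonsing_inv_mul _ hP]
    · calc M = P⁻¹ * ι Q * P := by
            rw [hQ, AlgEquiv.apply_symm_apply, Matrix.mul_assoc, Matrix.mul_assoc,
              nonsing_inv_mul _ hP, Matrix.mul_one, ← Matrix.mul_assoc, nonsing_inv_mul _ hP,
              Matrix.one_mul]
        _ = P⁻¹ * ι (fromBlocks U 0 0 1 * fromBlocks T (W * Q.toBlocks₁₂) 0 Q.toBlocks₂₂ *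
              fromBlocks W 0 0 1) * P := by rw [hQ']
        _ = _ := by simp only [map_mul, Matrix.mul_assoc]

end Triangularization

theorem kronecker_map {R S l m n p : Type*} [NonAssocSemiring R] [NonAssocSemiring S]
    (f : R →+* S) (A : Matrix l m R) (B : Matrix n p R) :
    (A ⊗ₖ B).map f = A.map f ⊗ₖ B.map f := by
  ext
  simp

section Kronecker

variable {R : Type*} [CommRing R] {m n p q : Type*} [Fintype m] [DecidableEq m]
  [Fintype n] [DecidableEq n] [Fintype p] [DecidableEq p] [Fintype q] [DecidableEq q]

theorem det_one_kronecker_sub_kronecker_of_isUpperTriangular [LinearOrder m] {T : Matrix m m R}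
    (hT : T.IsUpperTriangular) (G N : Matrix p p R) :
    ((1 : Matrix m m R) ⊗ₖ G - T ⊗ₖ N).det = ∏ i, (G - T i i • N).det := by
  have hblock : ((1 : Matrix m m R) ⊗ₖ G - T ⊗ₖ N).BlockTriangular Prod.fst := by
    intro x y h
    simp [one_apply_ne h.ne', hT h]
  rw [hblock.det_fintype]
  refine Finset.prod_congr rfl fun i _ => ?_
  let e : p ≃ {x : m × p // x.1 = i} :=
    ⟨fun a => ⟨(i, a), rfl⟩, fun x => x.1.2, fun _ => rfl, by rintro ⟨⟨_, _⟩, rfl⟩; rfl⟩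
  rw [← det_submatrix_equiv_self e]
  congr 1
  ext a b
  simp [e, toSquareBlock_def]

theorem det_one_kronecker_sub_conj_kronecker {U W : Matrix m m R} (hUW : U * W = 1)
    (T : Matrix m m R) (G N : Matrix p p R) :
    ((1 : Matrix m m R) ⊗ₖ G - (U * T * W) ⊗ₖ N).det =
      ((1 : Matrix m m R) ⊗ₖ G - T ⊗ₖ N).det := by
  have hconj : (1 : Matrix m m R) ⊗ₖ G - (U * T * W) ⊗ₖ N =
      (U ⊗ₖ (1 : Matrix p p R)) * (1 ⊗ₖ G - T ⊗ₖ N) * (W ⊗ₖ 1) := by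
    simp [Matrix.mul_sub, Matrix.sub_mul, ← mul_kronecker_mul, hUW]
  rw [hconj, det_conj_of_mul_eq_one] <;>
    simp [← mul_kronecker_mul, hUW, mul_eq_one_comm.mp hUW]

theorem det_fromBlocks_one_kronecker (G : Matrix p p R) (E : Matrix p q R) (E' : Matrix q p R)
    {D : Matrix q q R} (hD : IsUnit D.det) (a : Matrix m n R) (b : Matrix n m R) :
    (fromBlocks ((1 : Matrix m m R) ⊗ₖ G) (-(a ⊗ₖ E)) (-(b ⊗ₖ E'))
        ((1 : Matrix n n R) ⊗ₖ D)).det =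
      D.det ^ Fintype.card n * ((1 : Matrix m m R) ⊗ₖ G - (a * b) ⊗ₖ (E * D⁻¹ * E')).det := by
  have hinv : (1 : Matrix n n R) ⊗ₖ D * (1 ⊗ₖ D⁻¹) = 1 := by
    rw [← mul_kronecker_mul, mul_nonsing_inv _ hD, Matrix.one_mul, one_kronecker_one]
  let := invertibleOfRightInverse _ _ hinv
  rw [det_fromBlocks₂₂, invOf_eq_right_inv hinv, det_kronecker, det_one, one_pow, one_mul,
    Matrix.neg_mul, Matrix.neg_mul, Matrix.mul_neg, neg_neg, ← mul_kronecker_mul,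
    ← mul_kronecker_mul, Matrix.mul_one]

theorem det_fromBlocks_smul (G : Matrix p p R) (E : Matrix p q R) (E' : Matrix q p R)
    {D : Matrix q q R} (hD : IsUnit D.det) (s t : R) :
    (fromBlocks G (-(s • E)) (-(t • E')) D).det = D.det * (G - (s * t) • (E * D⁻¹ * E')).det := by
  let := invertibleOfIsUnitDet D hD
  rw [det_fromBlocks₂₂, invOf_eq_nonsing_inv]
  congr 2
  simp [smul_smul, Matrix.mul_smul, Matrix.smul_mul, Matrix.mul_assoc, mul_comm]

theorem charmatrix_one_kronecker (H : Matrix p p R) :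
    charmatrix ((1 : Matrix m m R) ⊗ₖ H) = 1 ⊗ₖ charmatrix H := by
  ext ⟨i, a⟩ ⟨j, b⟩ : 2
  by_cases hij : i = j <;> by_cases hab : a = b <;> simp [hij, hab]

section RatFunc

variable {K : Type*} [Field K]

noncomputable abbrev charmatrixRatFunc (H : Matrix p p K) : Matrix p p (RatFunc K) :=
  (charmatrix H).map (algebraMap K[X] (RatFunc K))

noncomputable def transferMatrix (H01 : Matrix p q K) (H10 : Matrix q p K) (H11 : Matrix q q K) :
    Matrix p p (RatFunc K) :=
  H01.map (algebraMap K (RatFunc K)) * (charmatrixRatFunc H11)⁻¹ *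
    H10.map (algebraMap K (RatFunc K))

theorem algebraMap_charpoly (H : Matrix p p K) :
    algebraMap K[X] (RatFunc K) H.charpoly = (charmatrixRatFunc H).det :=
  RingHom.map_det _ _

theorem isUnit_det_charmatrixRatFunc (H : Matrix p p K) : IsUnit (charmatrixRatFunc H).det := by
  rw [← algebraMap_charpoly, isUnit_iff_ne_zero, map_ne_zero_iff _ (RatFunc.algebraMap_injective K)]
  exact H.charpoly_monic.ne_zero

theorem charmatrixRatFunc_fromBlocks (H00 : Matrix p p K) (H01 : Matrix p q K)
    (H10 : Matrix q p K) (H11 : Matrix q q K) :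
    charmatrixRatFunc (fromBlocks H00 H01 H10 H11) =
      fromBlocks (charmatrixRatFunc H00) (-H01.map (algebraMap K (RatFunc K)))
        (-H10.map (algebraMap K (RatFunc K))) (charmatrixRatFunc H11) := by
  have hC : (algebraMap K[X] (RatFunc K)).comp C = algebraMap K (RatFunc K) := by
    rw [IsScalarTower.algebraMap_eq K K[X] (RatFunc K), Polynomial.algebraMap_eq]
  rw [charmatrixRatFunc, charmatrix_fromBlocks, fromBlocks_map, Matrix.map_neg _ (map_neg _),
    Matrix.map_neg _ (map_neg _), Matrix.map_map, Matrix.map_map, ← RingHom.coe_comp, hC]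

theorem charmatrixRatFunc_one_kronecker (H : Matrix p p K) :
    charmatrixRatFunc ((1 : Matrix m m K) ⊗ₖ H) = 1 ⊗ₖ charmatrixRatFunc H := by
  rw [charmatrixRatFunc, charmatrix_one_kronecker, kronecker_map,
    Matrix.map_one _ (map_zero _) (map_one _)]

theorem algebraMap_charpoly_fromBlocks_one_kronecker (A : Matrix m n K) (B : Matrix n m K)
    (H00 : Matrix p p K) (H01 : Matrix p q K) (H10 : Matrix q p K) (H11 : Matrix q q K) :
    algebraMap K[X] (RatFunc K) (fromBlocks ((1 : Matrix m m K) ⊗ₖ H00) (A ⊗ₖ H01) (B ⊗ₖ H10)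
        ((1 : Matrix n n K) ⊗ₖ H11)).charpoly =
      algebraMap K[X] (RatFunc K) H11.charpoly ^ Fintype.card n *
        ((1 : Matrix m m (RatFunc K)) ⊗ₖ charmatrixRatFunc H00 -
          (A * B).map (algebraMap K (RatFunc K)) ⊗ₖ transferMatrix H01 H10 H11).det := by
  rw [algebraMap_charpoly, charmatrixRatFunc_fromBlocks, algebraMap_charpoly,
    charmatrixRatFunc_one_kronecker, charmatrixRatFunc_one_kronecker, kronecker_map, kronecker_map,
    det_fromBlocks_one_kronecker _ _ _ (isUnit_det_charmatrixRatFunc H11), Matrix.map_mul]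
  rfl

theorem algebraMap_charpoly_fromBlocks_smul (H00 : Matrix p p K) (H01 : Matrix p q K)
    (H10 : Matrix q p K) (H11 : Matrix q q K) (s : K) :
    algebraMap K[X] (RatFunc K) (fromBlocks H00 (s • H01) (s • H10) H11).charpoly =
      algebraMap K[X] (RatFunc K) H11.charpoly *
        (charmatrixRatFunc H00 -
          algebraMap K (RatFunc K) (s ^ 2) • transferMatrix H01 H10 H11).det := by
  rw [algebraMap_charpoly, charmatrixRatFunc_fromBlocks, algebraMap_charpoly,
    Matrix.map_smulₛₗ _ (algebraMap K (RatFunc K)) _ (fun _ => map_mul _ _ _),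
    Matrix.map_smulₛₗ _ (algebraMap K (RatFunc K)) _ (fun _ => map_mul _ _ _),
    det_fromBlocks_smul _ _ _ (isUnit_det_charmatrixRatFunc H11), ← map_mul, ← sq]
  rfl

end RatFunc

end Kronecker

end Matrix

theorem stmt4 (m n p q : ℕ) (hmn : m ≤ n)
    (A : Matrix (Fin m) (Fin n) ℂ) (B : Matrix (Fin n) (Fin m) ℂ)
    (H00 : Matrix (Fin p) (Fin p) ℂ) (H01 : Matrix (Fin p) (Fin q) ℂ)
    (H10 : Matrix (Fin q) (Fin p) ℂ) (H11 : Matrix (Fin q) (Fin q) ℂ) :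
    ∃ σ : Fin m → ℂ,
      (A * B).charpoly = ∏ j : Fin m, (X - C (σ j ^ 2)) ∧
      (Matrix.fromBlocks ((1 : Matrix (Fin m) (Fin m) ℂ) ⊗ₖ H00) (A ⊗ₖ H01)
          (B ⊗ₖ H10) ((1 : Matrix (Fin n) (Fin n) ℂ) ⊗ₖ H11)).charpoly =
        (∏ j : Fin m,
          (Matrix.fromBlocks H00 (σ j • H01) (σ j • H10) H11).charpoly) *
          H11.charpoly ^ (n - m) := by
  obtain ⟨U, W, T, hUW, hT, hAB⟩ := exists_isUpperTriangular_conj (A * B)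
  choose σ hσ using fun j => IsAlgClosed.exists_pow_nat_eq (T j j) two_pos
  refine ⟨σ, ?_, ?_⟩
  · rw [hAB, charpoly_mul_comm, ← Matrix.mul_assoc, mul_eq_one_comm.mp hUW, Matrix.one_mul,
      charpoly_of_isUpperTriangular T hT]
    simp_rw [hσ]
  · obtain ⟨d, rfl⟩ := Nat.exists_eq_add_of_le hmn
    apply RatFunc.algebraMap_injective ℂ
    have hUW' : U.map (algebraMap ℂ (RatFunc ℂ)) * W.map (algebraMap ℂ (RatFunc ℂ)) = 1 := by
      rw [← Matrix.map_mul, hUW, Matrix.map_one _ (map_zero _) (map_one _)]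
    rw [algebraMap_charpoly_fromBlocks_one_kronecker, hAB, Matrix.map_mul, Matrix.map_mul,
      det_one_kronecker_sub_conj_kronecker hUW',
      det_one_kronecker_sub_kronecker_of_isUpperTriangular (hT.map _), map_mul, map_pow, map_prod]
    simp_rw [algebraMap_charpoly_fromBlocks_smul, hσ, Finset.prod_mul_distrib, Finset.prod_const,
      Finset.card_univ, Fintype.card_fin, map_apply]
    rw [Nat.add_sub_cancel_left, pow_add]
    ring
end

section
/- Let H00 be a p×p complex matrix, H11 a q×q complex matrix, let x0 : Fin p and x1 : Fin q, and let σ be a complex number. Let H01 be the p×q matrix whose (x0, x1) entry is 1 and all other entries 0, and let H10 = H01ᵀ. Then charpoly(H↑σ) = charpoly(H00) · charpoly(H11) − σ² · C(σ²)⁰ · charpoly(H00′) · charpoly(H11′), where H00′ is the (p−1)×(p−1) matrix obtained from H00 by deleting row and column x0 (i.e., the submatrix of H00 indexed by {i : Fin p // i ≠ x0}), and H11′ is obtained from H11 by deleting row and column x1. (Here σ² multiplies the polynomial as the constant polynomial.) -/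
/-!
In the characteristic matrix of `H↑σ` the bridge contributes the entries `-σ` at `(x0, x1)` and
`(x1, x0)` of the block-diagonal matrix `N = charmatrix H00 ⊕ charmatrix H11`. Expanding the
determinant multilinearly in these two rows gives four terms: `det N`, two terms in which one
diagonal block acquires a zero row, and a term which, after swapping the two rows, is `-σ²` times
the product of the two principal minors, i.e. of the characteristic polynomials of `H00′`, `H11′`.
-/

open Matrix Polynomial

namespace Matrix

variable {α l m n o : Type*}

theorem fromBlocks_updateRow_inl [DecidableEq m] [DecidableEq n] (A : Matrix m l α)
    (B : Matrix m o α) (C : Matrix n l α) (D : Matrix n o α) (i : m) (u : l → α) (v : o → α) :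
    (fromBlocks A B C D).updateRow (Sum.inl i) (Sum.elim u v) =
      fromBlocks (A.updateRow i u) (B.updateRow i v) C D := by
  ext (k | k) (j | j) <;> simp [updateRow_apply]

theorem fromBlocks_updateRow_inr [DecidableEq m] [DecidableEq n] (A : Matrix m l α)
    (B : Matrix m o α) (C : Matrix n l α) (D : Matrix n o α) (i : n) (u : l → α) (v : o → α) :
    (fromBlocks A B C D).updateRow (Sum.inr i) (Sum.elim u v) =
      fromBlocks A B (C.updateRow i u) (D.updateRow i v) := by
  ext (k | k) (j | j) <;> simp [updateRow_apply]

variable {R : Type*} [CommRing R] [Fintype m] [DecidableEq m] [Fintype n] [DecidableEq n]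

theorem det_updateRow_self_add (M : Matrix n n R) (a : n) (u : n → R) :
    (M.updateRow a (M a + u)).det = M.det + (M.updateRow a u).det := by
  rw [det_updateRow_add, updateRow_eq_self]

theorem det_updateRow_self_add_updateRow_self_add (M : Matrix n n R) {a b : n} (hab : a ≠ b)
    (u v : n → R) :
    ((M.updateRow a (M a + u)).updateRow b (M b + v)).det =
      M.det + (M.updateRow a u).det + (M.updateRow b v).det +
        ((M.updateRow a u).updateRow b v).det := by
  have hb : M b = M.updateRow a (M a + u) b := (updateRow_ne hab.symm).symm
  have ha : M a = M.updateRow b v a := (updateRow_ne hab).symm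
  rw [hb, det_updateRow_self_add, det_updateRow_self_add, updateRow_comm _ hab, ha,
    det_updateRow_self_add, ← updateRow_comm _ hab]
  ring

theorem det_updateRow_updateRow_swap (M : Matrix n n R) {a b : n} (hab : a ≠ b) (u v : n → R) :
    ((M.updateRow a u).updateRow b v).det = -((M.updateRow a v).updateRow b u).det := by
  have hswap : ((M.updateRow a u).updateRow b v).submatrix (Equiv.swap a b) id =
      (M.updateRow a v).updateRow b u := by
    ext k l
    rcases eq_or_ne k a with rfl | hka
    · simp [updateRow_apply, hab]
    rcases eq_or_ne k b with rfl | hkb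
    · simp [updateRow_apply, hab]
    · simp [updateRow_apply, Equiv.swap_apply_of_ne_of_ne hka hkb, hka, hkb]
  rw [← hswap, det_permute, Equiv.Perm.sign_swap hab]
  simp

theorem det_updateRow_single_smul (M : Matrix n n R) (a : n) (s : R) :
    (M.updateRow a (Pi.single a s)).det = s * (M.updateRow a (Pi.single a 1)).det := by
  rw [← det_updateRow_smul, ← Pi.single_smul', smul_eq_mul, mul_one]

theorem det_updateRow_single_self (M : Matrix n n R) (a : n) :
    (M.updateRow a (Pi.single a 1)).det = (M.submatrix ((↑) : {k // k ≠ a} → n) (↑)).det := by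
  rw [twoBlockTriangular_det _ (· ≠ a) fun k hk l hl => by simp [not_not.mp hk, hl]]
  have : Unique {k // ¬k ≠ a} := ⟨⟨⟨a, not_not.mpr rfl⟩⟩, fun k => Subtype.ext (not_not.mp k.2)⟩
  have hrest : (M.updateRow a (Pi.single a 1)).toSquareBlockProp (· ≠ a) =
      M.submatrix (↑) (↑) := by
    ext k l
    simp [toSquareBlockProp_def, updateRow_ne k.2]
  have hpivot : ((M.updateRow a (Pi.single a 1)).toSquareBlockProp fun k => ¬k ≠ a).det = 1 := by
    simp [det_unique, toSquareBlockProp_def, not_not.mp (default : {k // ¬k ≠ a}).2]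
  rw [hrest, hpivot, mul_one]

theorem det_fromBlocks_single_single (A : Matrix m m R) (D : Matrix n n R) (i : m) (j : n)
    (s t : R) :
    (fromBlocks A (single i j s) (single j i t) D).det =
      A.det * D.det - s * t * ((A.submatrix ((↑) : {k // k ≠ i} → m) (↑)).det *
        (D.submatrix ((↑) : {k // k ≠ j} → n) (↑)).det) := by
  set N := fromBlocks A 0 0 D
  have hab : (Sum.inl i : m ⊕ n) ≠ Sum.inr j := Sum.inl_ne_inr
  have hM : fromBlocks A (single i j s) (single j i t) D =
      (N.updateRow (.inl i) (N (.inl i) + Pi.single (.inr j) s)).updateRow (.inr j)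
        (N (.inr j) + Pi.single (.inl i) t) := by
    ext (k | k) (l | l) <;> simp [N, updateRow_apply, single_apply, Pi.single_apply] <;> aesop
  have hN : N.det = A.det * D.det := det_fromBlocks_zero₂₁ _ _ _
  have hinl : (N.updateRow (.inl i) (Pi.single (.inr j) s)).det = 0 := by
    rw [← Sum.elim_zero_single, fromBlocks_updateRow_inl, det_fromBlocks_zero₂₁,
      det_eq_zero_of_row_eq_zero i (by simp), zero_mul]
  have hinr : (N.updateRow (.inr j) (Pi.single (.inl i) t)).det = 0 := by
    rw [← Sum.elim_single_zero, fromBlocks_updateRow_inr, det_fromBlocks_zero₁₂,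
      det_eq_zero_of_row_eq_zero j (by simp), mul_zero]
  have hboth : ((N.updateRow (.inl i) (Pi.single (.inr j) s)).updateRow (.inr j)
        (Pi.single (.inl i) t)).det =
      -(s * t * ((A.submatrix ((↑) : {k // k ≠ i} → m) (↑)).det *
        (D.submatrix ((↑) : {k // k ≠ j} → n) (↑)).det)) := by
    rw [det_updateRow_updateRow_swap _ hab, ← Sum.elim_single_zero, ← Sum.elim_zero_single,
      fromBlocks_updateRow_inl, fromBlocks_updateRow_inr, updateRow_zero_zero, updateRow_zero_zero,
      det_fromBlocks_zero₂₁, det_updateRow_single_smul A, det_updateRow_single_smul D,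
      det_updateRow_single_self, det_updateRow_single_self]
    ring
  rw [hM, det_updateRow_self_add_updateRow_self_add _ hab, hN, hinl, hinr, hboth]
  ring

theorem charmatrix_submatrix (M : Matrix n n R) {f : m → n} (hf : Function.Injective f) :
    charmatrix (M.submatrix f f) = (charmatrix M).submatrix f f := by
  ext k l
  simp [charmatrix_apply, diagonal_apply, hf.eq_iff]

end Matrix

theorem stmt7 (p q : ℕ)
    (H00 : Matrix (Fin p) (Fin p) ℂ) (H11 : Matrix (Fin q) (Fin q) ℂ)
    (x0 : Fin p) (x1 : Fin q) (σ : ℂ)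
    (H01 : Matrix (Fin p) (Fin q) ℂ)
    (hH01 : H01 = Matrix.single x0 x1 (1 : ℂ))
    (H10 : Matrix (Fin q) (Fin p) ℂ) (hH10 : H10 = H01ᵀ) :
    (Matrix.fromBlocks H00 (σ • H01) (σ • H10) H11).charpoly =
      H00.charpoly * H11.charpoly -
        C (σ ^ 2) *
          ((H00.submatrix (fun i : {i : Fin p // i ≠ x0} => (i : Fin p))
              (fun i : {i : Fin p // i ≠ x0} => (i : Fin p))).charpoly *
            (H11.submatrix (fun i : {i : Fin q // i ≠ x1} => (i : Fin q))
              (fun i : {i : Fin q // i ≠ x1} => (i : Fin q))).charpoly) := by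
  subst hH10 hH01
  have hbridge : charmatrix (fromBlocks H00 (σ • single x0 x1 1) (σ • (single x0 x1 1)ᵀ) H11) =
      fromBlocks (charmatrix H00) (single x0 x1 (-C σ)) (single x1 x0 (-C σ)) (charmatrix H11) := by
    rw [charmatrix_fromBlocks, transpose_single]
    ext (k | k) (l | l) : 2 <;> simp [single_apply, neg_ite]
  rw [charpoly, hbridge, det_fromBlocks_single_single]
  simp only [charpoly, charmatrix_submatrix _ Subtype.val_injective, C_pow]
  ring
end

section
/- Let H00, H01, H10, H11 be complex matrices of sizes p×p, p×q, q×p, q×q respectively satisfying the compatibility conditions H00·H01 = H01·H11 and H11·H10 = H10·H00. Then there exist λ, μ : Fin (p+q) → ℂ such that ∏_{j} (X − λ j) = charpoly(H00) · charpoly(H11), ∏_{j} (X − μ j) equals the characteristic polynomial of the block matrix [[0, H01], [H10, 0]], and for every complex number σ, charpoly(H↑σ) = ∏_{j : Fin (p+q)} (X − (λ j + σ · μ j)). -/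
open Matrix Polynomial

namespace AuxStmt8

variable {n : Type*} [Fintype n] [DecidableEq n]

lemma charpoly_of_isNilpotent {K : Type*} [Field K] {N : Matrix n n K}
    (hN : IsNilpotent N) : N.charpoly = X ^ (Fintype.card n) := by
  have h := Matrix.isNilpotent_charpoly_sub_pow_of_isNilpotent hN
  have := h.eq_zero
  rwa [sub_eq_zero] at this

lemma det_one_sub_isNilpotent {K : Type*} [Field K] {N : Matrix n n K}
    (hN : IsNilpotent N) : (1 - N).det = 1 := by
  have hmap : (charmatrix N).map (evalRingHom (1 : K)) = 1 - N := by
    ext i j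
    by_cases h : i = j
    · subst h; simp [charmatrix_apply_eq, Matrix.one_apply, Matrix.sub_apply]
    · simp [charmatrix_apply_ne _ _ _ h, Matrix.one_apply, h, Matrix.sub_apply]
  have : (evalRingHom (1 : K)) N.charpoly = ((charmatrix N).map (evalRingHom (1 : K))).det :=
    RingHom.map_det _ _
  rw [hmap, charpoly_of_isNilpotent hN] at this
  simpa using this.symm

lemma eval_charpoly {K : Type*} [Field K] (M : Matrix n n K) (x : K) :
    eval x M.charpoly = (x • (1 : Matrix n n K) - M).det := by
  have hmap : (charmatrix M).map (evalRingHom x) = x • (1 : Matrix n n K) - M := by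
    ext i j
    by_cases h : i = j
    · subst h; simp [charmatrix_apply_eq, Matrix.one_apply, Matrix.sub_apply]
    · simp [charmatrix_apply_ne _ _ _ h, Matrix.one_apply, h, Matrix.sub_apply]
  have : (evalRingHom x) M.charpoly = ((charmatrix M).map (evalRingHom x)).det :=
    RingHom.map_det _ _
  rw [hmap] at this
  simpa using this

lemma charpoly_add_isNilpotent {M N : Matrix n n ℂ}
    (hMN : Commute M N) (hN : IsNilpotent N) :
    (M + N).charpoly = M.charpoly := by
  apply Polynomial.eq_of_infinite_eval_eq
  have hsub : {x : ℂ | ¬ M.charpoly.IsRoot x} ⊆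
      {x : ℂ | eval x (M + N).charpoly = eval x M.charpoly} := by
    intro x hx
    have hdet : (x • (1 : Matrix n n ℂ) - M).det ≠ 0 := by
      rw [← eval_charpoly]; exact hx
    set S : Matrix n n ℂ := x • (1 : Matrix n n ℂ) - M with hS
    have hSunit : IsUnit S.det := Ne.isUnit hdet
    have hSN : Commute S N := ((Commute.one_left N).smul_left x).sub_left hMN
    have hinv : Commute S⁻¹ N := by
      have h1 : S⁻¹ * (N * S) * S⁻¹ = S⁻¹ * (S * N) * S⁻¹ := by rw [hSN.eq]
      calc S⁻¹ * N = S⁻¹ * (N * S) * S⁻¹ := by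
            rw [mul_assoc, mul_assoc, Matrix.mul_nonsing_inv _ hSunit, mul_one]
        _ = S⁻¹ * (S * N) * S⁻¹ := h1
        _ = N * S⁻¹ := by
            rw [← mul_assoc S⁻¹ S N, Matrix.nonsing_inv_mul _ hSunit, one_mul]
    have hnil : IsNilpotent (S⁻¹ * N) := by
      obtain ⟨k, hk⟩ := hN
      exact ⟨k, by rw [hinv.mul_pow, hk, mul_zero]⟩
    have key : (S - N).det = S.det := by
      have : S - N = S * (1 - S⁻¹ * N) := by
        rw [mul_sub, mul_one, ← mul_assoc, Matrix.mul_nonsing_inv _ hSunit, one_mul]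
      rw [this, det_mul, det_one_sub_isNilpotent hnil, mul_one]
    simp only [Set.mem_setOf_eq]
    rw [eval_charpoly, eval_charpoly, ← key]
    congr 1
    rw [hS]; abel
  refine Set.Infinite.mono hsub ?_
  have : {x : ℂ | M.charpoly.IsRoot x}.Finite :=
    Polynomial.finite_setOf_isRoot (Matrix.charpoly_monic M).ne_zero
  exact this.infinite_compl

lemma charpoly_diagonal {K : Type*} [Field K] (d : n → K) :
    (Matrix.diagonal d).charpoly = ∏ i, (X - C (d i)) := by
  have : charmatrix (Matrix.diagonal d) = Matrix.diagonal (fun i => X - C (d i)) := by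
    ext i j
    by_cases h : i = j
    · subst h; simp [charmatrix_apply_eq]
    · simp [charmatrix_apply_ne _ _ _ h, Matrix.diagonal_apply_ne _ h]
  rw [Matrix.charpoly, this, Matrix.det_diagonal]

open Module

lemma pow_apply_mem {V : Type*} [AddCommGroup V] [Module ℂ V] (a : Module.End ℂ V)
    (U : Submodule ℂ V) (ha : ∀ x ∈ U, a x ∈ U) (k : ℕ) :
    ∀ x ∈ U, (a ^ k) x ∈ U := by
  induction k with
  | zero => intro x hx; simpa using hx
  | succ k ih =>
    intro x hx
    rw [pow_succ', Module.End.mul_apply]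
    exact ha _ (ih x hx)

lemma pow_add_smul_eq_zero {V : Type*} [AddCommGroup V] [Module ℂ V]
    (a b : Module.End ℂ V) (hab : Commute a b) (α β : ℂ) (U : Submodule ℂ V)
    (ha : ∀ x ∈ U, a x ∈ U) (hb : ∀ x ∈ U, b x ∈ U) (Ka Kb : ℕ)
    (hKa : ∀ x ∈ U, (a ^ Ka) x = 0) (hKb : ∀ x ∈ U, (b ^ Kb) x = 0)
    (x : V) (hx : x ∈ U) : ((α • a + β • b) ^ (Ka + Kb)) x = 0 := by
  have h1 : Commute (α • a) (β • b) := (hab.smul_left α).smul_right β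
  rw [h1.add_pow, LinearMap.sum_apply]
  apply Finset.sum_eq_zero
  intro m hm
  rw [Finset.mem_range, Nat.lt_succ_iff] at hm
  set y : V := ((((Ka + Kb).choose m : ℕ) : Module.End ℂ V)) x with hy
  have hyU : y ∈ U := by
    rw [hy, Module.End.natCast_apply]
    exact nsmul_mem hx _
  have hz : (a ^ m) ((b ^ (Ka + Kb - m)) y) = 0 := by
    rcases le_or_gt Ka m with hcase | hcase
    · rw [show m = (m - Ka) + Ka from (Nat.sub_add_cancel hcase).symm, pow_add,
        Module.End.mul_apply, hKa _ (pow_apply_mem b U hb _ y hyU), map_zero]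
    · have hKb' : Kb ≤ Ka + Kb - m := by omega
      rw [show Ka + Kb - m = (Ka + Kb - m - Kb) + Kb from (Nat.sub_add_cancel hKb').symm,
        pow_add, Module.End.mul_apply, hKb _ hyU, map_zero, map_zero]
  calc ((α • a) ^ m * (β • b) ^ (Ka + Kb - m) *
        (((Ka + Kb).choose m : ℕ) : Module.End ℂ V)) x
      = ((α • a) ^ m) (((β • b) ^ (Ka + Kb - m)) y) := by
        rw [Module.End.mul_apply, Module.End.mul_apply]
    _ = 0 := by
        rw [_root_.smul_pow, _root_.smul_pow, LinearMap.smul_apply, LinearMap.smul_apply,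
          _root_.map_smul, hz]
        simp


lemma key {V : Type*} [AddCommGroup V] [Module ℂ V] [FiniteDimensional ℂ V]
    (f g : Module.End ℂ V) (hfg : Commute f g) :
    ∃ lam mu : Fin (Module.finrank ℂ V) → ℂ,
      ∀ α β : ℂ, (α • f + β • g).charpoly =
        ∏ j, (X - C (α * lam j + β * mu j)) := by
  classical
  set F : Fin 2 → Module.End ℂ V := ![f, g] with hF
  have hcomm : ∀ i j, Commute (F i) (F j) := by
    intro i j
    fin_cases i <;> fin_cases j <;>
      simp [hF, Commute.refl, hfg, hfg.symm]
  have hmapsTo : ∀ i j φ,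
      Set.MapsTo (F i) ((F j).maxGenEigenspace φ) ((F j).maxGenEigenspace φ) :=
    fun i j φ => Module.End.mapsTo_maxGenEigenspace_of_comm (hcomm j i) φ
  set W : (Fin 2 → ℂ) → Submodule ℂ V := fun χ => ⨅ i, (F i).maxGenEigenspace (χ i) with hWdef
  have hsup : ⨆ χ, W χ = ⊤ :=
    Module.End.iSup_iInf_maxGenEigenspace_eq_top_of_forall_mapsTo F hmapsTo
      (fun i => Module.End.iSup_maxGenEigenspace_eq_top _)
  have hind : iSupIndep W :=
    Module.End.independent_iInf_maxGenEigenspace_of_forall_mapsTo F hmapsTo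
  have hInt : DirectSum.IsInternal W :=
    DirectSum.isInternal_submodule_of_iSupIndep_of_iSup_eq_top hind hsup
  set v : ∀ χ, Basis (Fin (Module.finrank ℂ (W χ))) ℂ (W χ) :=
    fun χ => Module.finBasis ℂ (W χ) with hv
  set B := hInt.collectedBasis v with hB
  letI : Fintype ((χ : Fin 2 → ℂ) × Fin (Module.finrank ℂ (W χ))) :=
    FiniteDimensional.fintypeBasisIndex B
  have hcard : Fintype.card ((χ : Fin 2 → ℂ) × Fin (Module.finrank ℂ (W χ)))
      = Module.finrank ℂ V := (Module.finrank_eq_card_basis B).symm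
  set e := Fintype.equivFinOfCardEq hcard with he
  -- invariance of the W χ
  have hWf : ∀ (χ) (x), x ∈ W χ → f x ∈ W χ := by
    intro χ x hx
    rw [hWdef, Submodule.mem_iInf] at hx ⊢
    intro i
    exact hmapsTo 0 i (χ i) (hx i)
  have hWg : ∀ (χ) (x), x ∈ W χ → g x ∈ W χ := by
    intro χ x hx
    rw [hWdef, Submodule.mem_iInf] at hx ⊢
    intro i
    exact hmapsTo 1 i (χ i) (hx i)
  -- uniform nilpotency exponents
  have hKf : ∀ (μ : ℂ) (x : V), x ∈ f.maxGenEigenspace μ →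
      ((f - μ • 1) ^ (Module.End.maxGenEigenspaceIndex f μ)) x = 0 := by
    intro μ x hx
    rw [Module.End.maxGenEigenspace_eq, Module.End.mem_genEigenspace_nat] at hx
    exact hx
  have hKg : ∀ (μ : ℂ) (x : V), x ∈ g.maxGenEigenspace μ →
      ((g - μ • 1) ^ (Module.End.maxGenEigenspaceIndex g μ)) x = 0 := by
    intro μ x hx
    rw [Module.End.maxGenEigenspace_eq, Module.End.mem_genEigenspace_nat] at hx
    exact hx
  refine ⟨fun j => (e.symm j).1 0, fun j => (e.symm j).1 1, ?_⟩
  intro α β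
  set c : ((χ : Fin 2 → ℂ) × Fin (Module.finrank ℂ (W χ))) → ℂ := fun s => α * s.1 0 + β * s.1 1 with hcdef
  set h := α • f + β • g with hh
  set M := LinearMap.toMatrix B B h with hM
  have hBmem : ∀ s : ((χ : Fin 2 → ℂ) × Fin (Module.finrank ℂ (W χ))), (B s : V) ∈ W s.1 := fun s => hInt.collectedBasis_mem v s
  have hWh : ∀ (χ) (x), x ∈ W χ → h x ∈ W χ := by
    intro χ x hx
    rw [hh]
    exact Submodule.add_mem _ (Submodule.smul_mem _ _ (hWf χ x hx))
      (Submodule.smul_mem _ _ (hWg χ x hx))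
  set Dm := Matrix.diagonal c with hDm
  set Tdiag := Matrix.toLin B B Dm with hTdiagdef
  have hreprz : ∀ (χ) (x : V), x ∈ W χ → ∀ s : ((χ' : Fin 2 → ℂ) × Fin (Module.finrank ℂ (W χ'))), s.1 ≠ χ → B.repr x s = 0 := by
    intro χ x hx s hs
    exact hInt.collectedBasis_repr_of_mem_ne v (a := s.2) hs.symm hx
  have hDiagApply : ∀ (χ) (x), x ∈ W χ → Tdiag x = (α * χ 0 + β * χ 1) • x := by
    intro χ x hx
    apply B.repr.injective
    apply DFunLike.coe_injective
    have h1 : (LinearMap.toMatrix B B Tdiag) *ᵥ (B.repr x) = B.repr (Tdiag x) :=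
      LinearMap.toMatrix_mulVec_repr B B Tdiag x
    rw [hTdiagdef, LinearMap.toMatrix_toLin] at h1
    show ⇑(B.repr (Tdiag x)) = ⇑(B.repr ((α * χ 0 + β * χ 1) • x))
    rw [hTdiagdef, ← h1]
    funext s
    rw [Matrix.mulVec_diagonal]
    have h2 : (B.repr ((α * χ 0 + β * χ 1) • x)) s = (α * χ 0 + β * χ 1) * B.repr x s := by
      rw [_root_.map_smul, Finsupp.smul_apply, smul_eq_mul]
    rw [h2]
    by_cases hs : s.1 = χ
    · rw [hcdef]; simp only []; rw [hs]
    · rw [hreprz χ x hx s hs, mul_zero, mul_zero]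
  have hblock : ∀ s t : ((χ : Fin 2 → ℂ) × Fin (Module.finrank ℂ (W χ))), s.1 ≠ t.1 → M s t = 0 := by
    intro s t hst
    rw [hM, LinearMap.toMatrix_apply]
    exact hreprz t.1 (h (B t)) (hWh t.1 _ (hBmem t)) s hst
  have hcommDM : Commute Dm M := by
    show Dm * M = M * Dm
    ext s t
    rw [hDm, Matrix.diagonal_mul, Matrix.mul_diagonal]
    by_cases hst : s.1 = t.1
    · have : c s = c t := by rw [hcdef]; simp only []; rw [hst]
      rw [this, mul_comm]
    · rw [hblock s t hst, mul_zero, zero_mul]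
  have hNil : IsNilpotent (M - Dm) := by
    have hMT : M - Dm = LinearMap.toMatrix B B (h - Tdiag) := by
      rw [map_sub, hTdiagdef, LinearMap.toMatrix_toLin, hM]
    suffices hT : IsNilpotent (h - Tdiag) by
      obtain ⟨k, hk⟩ := hT
      exact ⟨k, by rw [hMT, LinearMap.toMatrix_pow, hk, map_zero]⟩
    set K := Finset.univ.sup (fun s : ((χ : Fin 2 → ℂ) × Fin (Module.finrank ℂ (W χ))) =>
      Module.End.maxGenEigenspaceIndex f (s.1 0) + Module.End.maxGenEigenspaceIndex g (s.1 1))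
      with hKdef
    refine ⟨K, B.ext fun s => ?_⟩
    set χ := s.1 with hχ
    set u := h - (α * χ 0 + β * χ 1) • (1 : Module.End ℂ V) with hu
    have hTu : ∀ y ∈ W χ, (h - Tdiag) y = u y := by
      intro y hy
      rw [LinearMap.sub_apply, hDiagApply χ y hy, hu, LinearMap.sub_apply,
        LinearMap.smul_apply, Module.End.one_apply]
    have hWa : ∀ x ∈ W χ, (f - χ 0 • (1 : Module.End ℂ V)) x ∈ W χ := by
      intro x hx
      rw [LinearMap.sub_apply, LinearMap.smul_apply, Module.End.one_apply]
      exact Submodule.sub_mem _ (hWf χ x hx) (Submodule.smul_mem _ _ hx)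
    have hWb : ∀ x ∈ W χ, (g - χ 1 • (1 : Module.End ℂ V)) x ∈ W χ := by
      intro x hx
      rw [LinearMap.sub_apply, LinearMap.smul_apply, Module.End.one_apply]
      exact Submodule.sub_mem _ (hWg χ x hx) (Submodule.smul_mem _ _ hx)
    have hu_mem : ∀ y ∈ W χ, u y ∈ W χ := by
      intro y hy
      rw [hu, LinearMap.sub_apply, LinearMap.smul_apply, Module.End.one_apply]
      exact Submodule.sub_mem _ (hWh χ y hy) (Submodule.smul_mem _ _ hy)
    have claim1 : ∀ (m : ℕ) (x), x ∈ W χ → ((h - Tdiag) ^ m) x = (u ^ m) x := by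
      intro m
      induction m with
      | zero => intro x _; simp
      | succ m ih =>
        intro x hx
        rw [pow_succ, pow_succ, Module.End.mul_apply, Module.End.mul_apply, hTu x hx,
          ih (u x) (hu_mem x hx)]
    have hmemf : ∀ x ∈ W χ, x ∈ f.maxGenEigenspace (χ 0) := by
      intro x hx
      have := (Submodule.mem_iInf _).mp hx 0
      simpa [hF] using this
    have hmemg : ∀ x ∈ W χ, x ∈ g.maxGenEigenspace (χ 1) := by
      intro x hx
      have := (Submodule.mem_iInf _).mp hx 1
      simpa [hF] using this
    have hab : Commute (f - χ 0 • (1 : Module.End ℂ V)) (g - χ 1 • (1 : Module.End ℂ V)) := by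
      have h1 : Commute f (g - χ 1 • (1 : Module.End ℂ V)) :=
        hfg.sub_right ((Commute.one_right f).smul_right (χ 1))
      have h2 : Commute (χ 0 • (1 : Module.End ℂ V)) (g - χ 1 • (1 : Module.End ℂ V)) :=
        (((Commute.one_left g).smul_left (χ 0)).sub_right
          (((Commute.one_right (1 : Module.End ℂ V)).smul_left (χ 0)).smul_right (χ 1)))
      exact h1.sub_left h2
    set ks := Module.End.maxGenEigenspaceIndex f (χ 0) +
      Module.End.maxGenEigenspaceIndex g (χ 1) with hks
    have claim2 : ∀ x ∈ W χ, (u ^ ks) x = 0 := by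
      intro x hx
      have hdecomp : u = α • (f - χ 0 • (1 : Module.End ℂ V)) +
          β • (g - χ 1 • (1 : Module.End ℂ V)) := by
        rw [hu, hh]
        module
      rw [hdecomp, hks]
      exact pow_add_smul_eq_zero _ _ hab α β (W χ) hWa hWb _ _
        (fun x hx => hKf (χ 0) x (hmemf x hx)) (fun x hx => hKg (χ 1) x (hmemg x hx)) x hx
    have hle : ks ≤ K := by
      rw [hKdef, hks]
      exact Finset.le_sup (f := fun t : ((χ : Fin 2 → ℂ) × Fin (Module.finrank ℂ (W χ))) =>
        Module.End.maxGenEigenspaceIndex f (t.1 0) + Module.End.maxGenEigenspaceIndex g (t.1 1))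
        (Finset.mem_univ s)
    rw [show K = (K - ks) + ks from (Nat.sub_add_cancel hle).symm, pow_add,
      Module.End.mul_apply, claim1 ks (B s) (hBmem s), claim2 (B s) (hBmem s), map_zero,
      LinearMap.zero_apply]
  have hcommDN : Commute Dm (M - Dm) := hcommDM.sub_right (Commute.refl Dm)
  calc (α • f + β • g).charpoly = M.charpoly := (LinearMap.charpoly_toMatrix h B).symm
    _ = (Dm + (M - Dm)).charpoly := by rw [add_sub_cancel]
    _ = Dm.charpoly := charpoly_add_isNilpotent hcommDN hNil
    _ = ∏ s, (X - C (c s)) := charpoly_diagonal c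
    _ = ∏ j, (X - C (α * (e.symm j).1 0 + β * (e.symm j).1 1)) := by
        rw [← Equiv.prod_comp e (fun j => X - C (α * (e.symm j).1 0 + β * (e.symm j).1 1))]
        apply Finset.prod_congr rfl
        intro s _
        rw [Equiv.symm_apply_apply, hcdef]

lemma charpoly_toLin' {n : Type*} [Fintype n] [DecidableEq n] (M : Matrix n n ℂ) :
    LinearMap.charpoly (Matrix.toLin' M) = M.charpoly := by
  rw [← LinearMap.charpoly_toMatrix (Matrix.toLin' M) (Pi.basisFun ℂ n),
    LinearMap.toMatrix_eq_toMatrix', LinearMap.toMatrix'_toLin']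

end AuxStmt8

theorem stmt8 (p q : ℕ)
    (H00 : Matrix (Fin p) (Fin p) ℂ) (H01 : Matrix (Fin p) (Fin q) ℂ)
    (H10 : Matrix (Fin q) (Fin p) ℂ) (H11 : Matrix (Fin q) (Fin q) ℂ)
    (hc1 : H00 * H01 = H01 * H11) (hc2 : H11 * H10 = H10 * H00) :
    ∃ lam mu : Fin (p + q) → ℂ,
      (∏ j : Fin (p + q), (X - C (lam j))) = H00.charpoly * H11.charpoly ∧
      (∏ j : Fin (p + q), (X - C (mu j))) =
        (Matrix.fromBlocks (0 : Matrix (Fin p) (Fin p) ℂ) H01 H10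
          (0 : Matrix (Fin q) (Fin q) ℂ)).charpoly ∧
      ∀ σ : ℂ,
        (Matrix.fromBlocks H00 (σ • H01) (σ • H10) H11).charpoly =
          ∏ j : Fin (p + q), (X - C (lam j + σ * mu j)) := by
  classical
  set Dmat : Matrix (Fin p ⊕ Fin q) (Fin p ⊕ Fin q) ℂ :=
    Matrix.fromBlocks H00 0 0 H11 with hD
  set Amat : Matrix (Fin p ⊕ Fin q) (Fin p ⊕ Fin q) ℂ :=
    Matrix.fromBlocks (0 : Matrix (Fin p) (Fin p) ℂ) H01 H10
      (0 : Matrix (Fin q) (Fin q) ℂ) with hA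
  have hDA : Dmat * Amat = Amat * Dmat := by
    rw [hD, hA, Matrix.fromBlocks_multiply, Matrix.fromBlocks_multiply]
    simp [hc1, hc2]
  set ra := Matrix.reindexAlgEquiv ℂ ℂ (finSumFinEquiv (m := p) (n := q)) with hra
  set D' := ra Dmat with hD'
  set A' := ra Amat with hA'
  have hDA' : D' * A' = A' * D' := by rw [hD', hA', ← _root_.map_mul, ← _root_.map_mul, hDA]
  set fD := Matrix.toLin' D' with hfD
  set fA := Matrix.toLin' A' with hfA
  have hmul : ∀ (P Q : Matrix (Fin (p+q)) (Fin (p+q)) ℂ),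
      Matrix.toLin' P * Matrix.toLin' Q = Matrix.toLin' (P * Q) := by
    intro P Q
    rw [Matrix.toLin'_mul]
    rfl
  have hfg : Commute fD fA := by
    show fD * fA = fA * fD
    rw [hfD, hfA, hmul, hmul, hDA']
  obtain ⟨lam0, mu0, hkey⟩ := AuxStmt8.key fD fA hfg
  have hfr : Module.finrank ℂ (Fin (p+q) → ℂ) = p + q := Module.finrank_fin_fun ℂ
  set eqv : Fin (Module.finrank ℂ (Fin (p+q) → ℂ)) ≃ Fin (p+q) := finCongr hfr with heqv
  have hprod : ∀ α β : ℂ, (α • fD + β • fA).charpoly =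
      ∏ j : Fin (p+q), (X - C (α * lam0 (eqv.symm j) + β * mu0 (eqv.symm j))) := by
    intro α β
    rw [hkey α β,
      ← Equiv.prod_comp eqv (fun j => X - C (α * lam0 (eqv.symm j) + β * mu0 (eqv.symm j)))]
    simp
  have hcharM : ∀ P : Matrix (Fin p ⊕ Fin q) (Fin p ⊕ Fin q) ℂ,
      LinearMap.charpoly (Matrix.toLin' (ra P)) = P.charpoly := by
    intro P
    rw [AuxStmt8.charpoly_toLin', hra, Matrix.reindexAlgEquiv_apply,
      Matrix.charpoly_reindex]
  refine ⟨fun j => lam0 (eqv.symm j), fun j => mu0 (eqv.symm j), ?_, ?_, ?_⟩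
  · have h1 := hprod 1 0
    simp only [one_smul, zero_smul, add_zero, one_mul, zero_mul] at h1
    rw [← h1, hfD, hD', hcharM Dmat, hD, Matrix.charpoly_fromBlocks_zero₁₂]
  · have h1 := hprod 0 1
    simp only [one_smul, zero_smul, zero_add, one_mul, zero_mul] at h1
    rw [← h1, hfA, hA', hcharM Amat, hA]
  · intro σ
    have hmat : Matrix.fromBlocks H00 (σ • H01) (σ • H10) H11 = Dmat + σ • Amat := by
      rw [hD, hA, Matrix.fromBlocks_smul, Matrix.fromBlocks_add]
      simp
    have hlin : Matrix.toLin' (ra (Dmat + σ • Amat)) = (1 : ℂ) • fD + σ • fA := by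
      rw [_root_.map_add, _root_.map_smul, _root_.map_add, _root_.map_smul, hfD, hfA, hD', hA', one_smul]
    rw [hmat, ← hcharM (Dmat + σ • Amat), hlin, hprod 1 σ]
    simp only [one_mul]
end

section
/- Let m, n be positive natural numbers and d a real number. Let H00 be a symmetric m×m real matrix each of whose row sums equals d (i.e., H00 applied to the all-ones vector is d times the all-ones vector), let H11 be a symmetric n×n real matrix each of whose row sums equals d, let H01 be the m×n all-ones matrix, and let H10 = H01ᵀ. Then for every real number σ, charpoly(H↑σ) · (X − C d)² = (X − C(d + σ·√(m·n))) · (X − C(d − σ·√(m·n))) · charpoly(H00) · charpoly(H11), where C d denotes the constant polynomial d. -/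
open Matrix Polynomial

private lemma my_eval_charpoly {k : Type*} [Fintype k] [DecidableEq k] (M : Matrix k k ℝ) (t : ℝ) :
    M.charpoly.eval t = (t • (1 : Matrix k k ℝ) - M).det := by
  rw [Matrix.charpoly, _root_.eval_det, matPolyEquiv_charmatrix]
  congr 1
  rw [eval_sub, eval_X, eval_C]
  congr 1
  ext i j
  simp [Matrix.scalar_apply, Matrix.smul_apply, Matrix.one_apply, diagonal]

private lemma my_mul_vecMulVec {k l p : ℕ} (M : Matrix (Fin k) (Fin l) ℝ) (a : Fin l → ℝ)
    (b : Fin p → ℝ) : M * vecMulVec a b = vecMulVec (M *ᵥ a) b := by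
  ext i j
  simp [Matrix.mul_apply, vecMulVec_apply, mulVec, dotProduct, Finset.sum_mul, mul_assoc]

private lemma my_vecMulVec_mul_vecMulVec {k l p : ℕ} (a : Fin k → ℝ) (b c : Fin l → ℝ)
    (e : Fin p → ℝ) : vecMulVec a b * vecMulVec c e = (b ⬝ᵥ c) • vecMulVec a e := by
  ext i j
  simp only [Matrix.mul_apply, vecMulVec_apply, Matrix.smul_apply, dotProduct, Finset.sum_mul,
    smul_eq_mul, Finset.mul_sum]
  apply Finset.sum_congr rfl
  intro x _
  ring

private lemma my_inv_mulVec_eig {k : ℕ} (B : Matrix (Fin k) (Fin k) ℝ) (x : Fin k → ℝ) (c : ℝ)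
    (hc : c ≠ 0) (hdet : IsUnit B.det) (h : B *ᵥ x = c • x) : B⁻¹ *ᵥ x = c⁻¹ • x := by
  have h2 : B⁻¹ *ᵥ (B *ᵥ x) = B⁻¹ *ᵥ (c • x) := by rw [h]
  rw [Matrix.mulVec_mulVec, Matrix.nonsing_inv_mul _ hdet, Matrix.one_mulVec,
    Matrix.mulVec_smul] at h2
  calc B⁻¹ *ᵥ x = c⁻¹ • (c • (B⁻¹ *ᵥ x)) := by rw [smul_smul, inv_mul_cancel₀ hc, one_smul]
    _ = c⁻¹ • x := by rw [← h2]

theorem stmt10 (m n : ℕ) (hm : 0 < m) (hn : 0 < n) (d : ℝ)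
    (H00 : Matrix (Fin m) (Fin m) ℝ) (H11 : Matrix (Fin n) (Fin n) ℝ)
    (H01 : Matrix (Fin m) (Fin n) ℝ) (H10 : Matrix (Fin n) (Fin m) ℝ)
    (hH00sym : H00ᵀ = H00) (hH11sym : H11ᵀ = H11)
    (hH00row : H00 *ᵥ (fun _ => (1 : ℝ)) = d • fun _ => (1 : ℝ))
    (hH11row : H11 *ᵥ (fun _ => (1 : ℝ)) = d • fun _ => (1 : ℝ))
    (hH01 : H01 = Matrix.of fun _ _ => (1 : ℝ)) (hH10 : H10 = H01ᵀ) :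
    ∀ σ : ℝ,
      (Matrix.fromBlocks H00 (σ • H01) (σ • H10) H11).charpoly *
          (X - C d) ^ 2 =
        (X - C (d + σ * Real.sqrt (m * n))) *
          (X - C (d - σ * Real.sqrt (m * n))) *
          (H00.charpoly * H11.charpoly) := by
  intro σ
  apply Polynomial.eq_of_infinite_eval_eq
  have hpol : ((X - C d) * H00.charpoly * H11.charpoly : ℝ[X]) ≠ 0 :=
    mul_ne_zero (mul_ne_zero (X_sub_C_ne_zero d) H00.charpoly_monic.ne_zero)
      H11.charpoly_monic.ne_zero
  have hfin := Polynomial.finite_setOf_isRoot hpol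
  refine Set.Infinite.mono ?_ hfin.infinite_compl
  intro t ht
  simp only [Set.mem_compl_iff, Set.mem_setOf_eq, IsRoot, eval_mul, eval_sub, eval_X, eval_C,
    mul_eq_zero, not_or] at ht
  obtain ⟨⟨htd, h00⟩, h11⟩ := ht
  simp only [Set.mem_setOf_eq]
  set u : Fin m → ℝ := fun _ => 1 with hu
  set v : Fin n → ℝ := fun _ => 1 with hv
  set A := t • (1 : Matrix (Fin m) (Fin m) ℝ) - H00 with hA
  set D := t • (1 : Matrix (Fin n) (Fin n) ℝ) - H11 with hD
  have hAdet : A.det ≠ 0 := by rwa [← my_eval_charpoly]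
  have hDdet : D.det ≠ 0 := by rwa [← my_eval_charpoly]
  haveI : Invertible A := A.invertibleOfIsUnitDet (isUnit_iff_ne_zero.2 hAdet)
  have htd' : t - d ≠ 0 := htd
  have hAu : A *ᵥ u = (t - d) • u := by
    rw [hA, sub_mulVec, smul_mulVec, one_mulVec, hu, hH00row, sub_smul]
  have hDv : D *ᵥ v = (t - d) • v := by
    rw [hD, sub_mulVec, smul_mulVec, one_mulVec, hv, hH11row, sub_smul]
  have hAinvu : A⁻¹ *ᵥ u = (t - d)⁻¹ • u :=
    my_inv_mulVec_eig A u (t - d) htd' (isUnit_iff_ne_zero.2 hAdet) hAu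
  have e01 : H01 = vecMulVec u v := by
    ext i j; simp [hH01, vecMulVec_apply, hu, hv]
  have e10 : H10 = vecMulVec v u := by
    ext i j; simp [hH10, hH01, vecMulVec_apply, hu, hv]
  have hblock : t • (1 : Matrix (Fin m ⊕ Fin n) (Fin m ⊕ Fin n) ℝ) -
      Matrix.fromBlocks H00 (σ • H01) (σ • H10) H11 =
      Matrix.fromBlocks A (-(σ • H01)) (-(σ • H10)) D := by
    rw [← Matrix.fromBlocks_one, Matrix.fromBlocks_smul]
    ext (i | i) (j | j) <;>
      simp [Matrix.fromBlocks, Matrix.sub_apply, hA, hD]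
  have hmul : (-(σ • H10)) * A⁻¹ * (-(σ • H01)) =
      (σ * σ * ((t - d)⁻¹ * m)) • vecMulVec v v := by
    rw [e01, e10, Matrix.neg_mul, Matrix.neg_mul, Matrix.mul_neg, neg_neg]
    simp only [Matrix.smul_mul, Matrix.mul_smul, smul_smul, Matrix.mul_assoc]
    rw [my_mul_vecMulVec, hAinvu, my_vecMulVec_mul_vecMulVec, dotProduct_smul, smul_smul]
    have huu : u ⬝ᵥ u = (m : ℝ) := by simp [dotProduct, hu]
    rw [huu]
    congr 1
  set c : ℝ := σ * σ * ((t - d)⁻¹ * m) with hc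
  have hvv : v ⬝ᵥ v = (n : ℝ) := by simp [dotProduct, hv]
  have hDinv : IsUnit D.det := isUnit_iff_ne_zero.2 hDdet
  have factor : D - c • vecMulVec v v =
      D * (1 + replicateCol Unit (-(c * (t - d)⁻¹) • v) * replicateRow Unit v) := by
    rw [← Matrix.vecMulVec_eq Unit, Matrix.mul_add, Matrix.mul_one, my_mul_vecMulVec,
      Matrix.mulVec_smul, hDv, smul_smul]
    have : -(c * (t - d)⁻¹) * (t - d) = -c := by field_simp
    rw [this]
    ext i j
    simp only [Matrix.sub_apply, Matrix.add_apply, Matrix.smul_apply, vecMulVec_apply,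
      neg_smul, Pi.neg_apply, Pi.smul_apply, smul_eq_mul]
    ring
  have hdetS : (D - c • vecMulVec v v).det = D.det * (1 - c * (t - d)⁻¹ * n) := by
    rw [factor, det_mul, Matrix.det_one_add_replicateCol_mul_replicateRow, dotProduct_smul, hvv]
    simp only [smul_eq_mul]
    ring
  -- now compute both evals
  simp only [eval_mul, eval_pow, eval_sub, eval_X, eval_C]
  rw [my_eval_charpoly (Matrix.fromBlocks H00 (σ • H01) (σ • H10) H11) t, hblock,
    Matrix.det_fromBlocks₁₁, Matrix.invOf_eq_nonsing_inv, hmul, hdetS,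
    my_eval_charpoly H00 t, my_eval_charpoly H11 t, ← hA, ← hD]
  have hs : Real.sqrt (m * n) ^ 2 = (m : ℝ) * n := Real.sq_sqrt (by positivity)
  have key : (t - (d + σ * Real.sqrt (m * n))) * (t - (d - σ * Real.sqrt (m * n))) =
      (t - d) ^ 2 - σ ^ 2 * ((m : ℝ) * n) := by
    calc (t - (d + σ * Real.sqrt (m * n))) * (t - (d - σ * Real.sqrt (m * n)))
        = (t - d) ^ 2 - σ ^ 2 * Real.sqrt (m * n) ^ 2 := by ring
      _ = (t - d) ^ 2 - σ ^ 2 * ((m : ℝ) * n) := by rw [hs]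
  rw [key, hc]
  field_simp
end

section
/- Let m, n, p, q be natural numbers with m ≥ n ≥ 1. Let H00, H01, H10, H11 be real matrices of sizes p×p, p×q, q×p, q×q respectively, and let A be the m×n all-ones real matrix. Then the characteristic polynomial of the (m·p+n·q)×(m·p+n·q) block matrix [[I_m ⊗ H00, A ⊗ H01], [Aᵀ ⊗ H10, I_n ⊗ H11]] equals charpoly(H↑√(m·n)) · (charpoly(H00) · charpoly(H11))^(n−1) · (charpoly(H00))^(m−n). -/
open Matrix Polynomial Kronecker


lemma my_charpoly_conj {k : Type*} [Fintype k] [DecidableEq k] {R : Type*} [CommRing R]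
    (U M V : Matrix k k R) (hUV : U * V = 1) :
    (U * M * V).charpoly = M.charpoly := by
  have hmap : ∀ (N P' : Matrix k k R),
      ((N * P').map (Polynomial.C (R := R))) = N.map Polynomial.C * P'.map Polynomial.C :=
    fun N P' => Matrix.map_mul
  have hs : (Matrix.scalar k (X : R[X])) = (X : R[X]) • (1 : Matrix k k R[X]) := by
    rw [Matrix.scalar_apply, smul_one_eq_diagonal]
  have hone : (U.map (Polynomial.C (R := R))) * (V.map Polynomial.C) = 1 := by
    rw [← hmap, hUV]
    exact Matrix.map_one _ (map_zero _) (map_one _)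
  have h1 : charmatrix (U * M * V) =
      U.map Polynomial.C * charmatrix M * V.map Polynomial.C := by
    rw [charmatrix, charmatrix, RingHom.mapMatrix_apply, RingHom.mapMatrix_apply,
      hmap, hmap, hs]
    rw [Matrix.mul_sub, Matrix.sub_mul, Matrix.mul_smul, mul_one,
      Matrix.smul_mul, hone]
  rw [Matrix.charpoly, Matrix.charpoly, h1, Matrix.det_mul, Matrix.det_mul]
  have : (U.map (Polynomial.C (R := R))).det * (V.map Polynomial.C).det = 1 := by
    rw [← Matrix.det_mul, hone, Matrix.det_one]
  calc (U.map Polynomial.C).det * (charmatrix M).det * (V.map Polynomial.C).det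
      = ((U.map Polynomial.C).det * (V.map Polynomial.C).det) * (charmatrix M).det := by ring
    _ = (charmatrix M).det := by rw [this, one_mul]

lemma my_charpoly_one_kron {k l : Type*} [Fintype k] [DecidableEq k] [Fintype l] [DecidableEq l]
    {R : Type*} [CommRing R] (H : Matrix l l R) :
    ((1 : Matrix k k R) ⊗ₖ H).charpoly = H.charpoly ^ (Fintype.card k) := by
  have h1 : charmatrix ((1 : Matrix k k R) ⊗ₖ H) = (1 : Matrix k k R[X]) ⊗ₖ charmatrix H := by
    ext ⟨i, a⟩ ⟨j, b⟩
    by_cases hij : i = j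
    · subst hij
      by_cases hab : a = b
      · subst hab; simp [charmatrix_apply, Matrix.kroneckerMap_apply, Matrix.one_apply,
          Matrix.diagonal_apply]
      · simp [charmatrix_apply, Matrix.kroneckerMap_apply, Matrix.one_apply,
          Matrix.diagonal_apply, hab, Prod.ext_iff]
    · simp [charmatrix_apply, Matrix.kroneckerMap_apply, Matrix.one_apply,
        Matrix.diagonal_apply, hij, Prod.ext_iff]
  rw [Matrix.charpoly, h1, Matrix.det_kronecker, Matrix.det_one, one_pow, one_mul,
    Matrix.charpoly]

section
variable (m : ℕ) [NeZero m]

noncomputable def Pmat (c : ℝ) : Matrix (Fin m) (Fin m) ℝ :=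
  Matrix.of fun i j => if j = 0 then c else ((if i = j then (1:ℝ) else 0) - (if i = 0 then 1 else 0))

noncomputable def Pinv (d : ℝ) : Matrix (Fin m) (Fin m) ℝ :=
  Matrix.of fun i j => if i = 0 then d else ((if i = j then (1:ℝ) else 0) - 1 / m)

lemma Pinv_mul_Pmat (c d : ℝ) (hcd : (m : ℝ) * d * c = 1) :
    Pinv m d * Pmat m c = 1 := by
  have hm : (m : ℝ) ≠ 0 := Nat.cast_ne_zero.mpr (NeZero.ne m)
  ext i j
  rw [Matrix.mul_apply]
  by_cases hi : i = 0 <;> by_cases hj : j = 0 <;>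
    simp [Pinv, Pmat, hi, hj, Matrix.one_apply, mul_sub, sub_mul, Finset.sum_sub_distrib,
      mul_ite, ite_mul, Finset.card_univ]
  · rw [← mul_assoc]; exact hcd
  · simp [eq_comm, hj]
  · field_simp
    simp
end

lemma Pmat_mul_single_mul_Pinv {m n : ℕ} [NeZero m] [NeZero n] (c σ d : ℝ) :
    Pmat m c * (Matrix.of fun (i : Fin m) (j : Fin n) => if i = 0 ∧ j = 0 then σ else 0) *
      Pinv n d = Matrix.of fun _ _ => c * σ * d := by
  ext i j
  rw [Matrix.mul_apply]
  simp [Pmat, Pinv, Matrix.mul_apply, ite_and, ite_mul, mul_ite, Finset.sum_ite_eq,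
    Finset.sum_ite_eq', Finset.mul_sum, Finset.sum_mul]
  rw [Finset.sum_eq_single (0 : Fin n)]
  · simp
  · intro b _ hb; simp [hb]
  · simp

def oneProd (α : Type*) : Fin 1 × α ≃ α where
  toFun x := x.2
  invFun a := (0, a)
  left_inv := fun ⟨i, a⟩ => by
    obtain rfl : i = 0 := Subsingleton.elim i 0
    rfl
  right_inv _ := rfl

def ek (k : ℕ) [NeZero k] : Fin k ≃ Fin 1 ⊕ Fin (k - 1) :=
  (finCongr (by have := NeZero.pos k; omega : k = 1 + (k - 1))).trans finSumFinEquiv.symm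

lemma ek_zero (k : ℕ) [NeZero k] : ek k 0 = Sum.inl 0 := by
  have h : finCongr (by have := NeZero.pos k; omega : k = 1 + (k - 1)) (0 : Fin k) = Fin.castAdd (k - 1) (0 : Fin 1) := by
    ext; simp
  simp [ek, h, finSumFinEquiv_symm_apply_castAdd]

lemma ek_eq_inl_iff (k : ℕ) [NeZero k] (i : Fin k) (x : Fin 1) :
    ek k i = Sum.inl x ↔ i = 0 := by
  obtain rfl : x = 0 := Subsingleton.elim x 0
  rw [← ek_zero k]
  exact ⟨fun h => (ek k).injective h, fun h => by rw [h]⟩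

def bigE (m n p q : ℕ) [NeZero m] [NeZero n] :
    ((Fin m × Fin p) ⊕ (Fin n × Fin q)) ≃
      ((Fin p ⊕ Fin q) ⊕ ((Fin (m - 1) × Fin p) ⊕ (Fin (n - 1) × Fin q))) :=
  (Equiv.sumCongr
      (((ek m).prodCongr (Equiv.refl (Fin p))).trans (Equiv.sumProdDistrib _ _ _))
      (((ek n).prodCongr (Equiv.refl (Fin q))).trans (Equiv.sumProdDistrib _ _ _))).trans
    ((Equiv.sumSumSumComm _ _ _ _).trans
      (Equiv.sumCongr ((oneProd (Fin p)).sumCongr (oneProd (Fin q))) (Equiv.refl _)))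

variable {m n p q : ℕ} [NeZero m] [NeZero n]

lemma bigE_inl_inl {i : Fin m} {x : Fin 1} (h : ek m i = Sum.inl x) (a : Fin p) :
    bigE m n p q (Sum.inl (i, a)) = Sum.inl (Sum.inl a) := by
  simp [bigE, h, oneProd]

lemma bigE_inl_inr {i : Fin m} {i' : Fin (m - 1)} (h : ek m i = Sum.inr i') (a : Fin p) :
    bigE m n p q (Sum.inl (i, a)) = Sum.inr (Sum.inl (i', a)) := by
  simp [bigE, h]

lemma bigE_inr_inl {j : Fin n} {x : Fin 1} (h : ek n j = Sum.inl x) (b : Fin q) :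
    bigE m n p q (Sum.inr (j, b)) = Sum.inl (Sum.inr b) := by
  simp [bigE, h, oneProd]

lemma bigE_inr_inr {j : Fin n} {j' : Fin (n - 1)} (h : ek n j = Sum.inr j') (b : Fin q) :
    bigE m n p q (Sum.inr (j, b)) = Sum.inr (Sum.inr (j', b)) := by
  simp [bigE, h]

section

theorem stmt12 (m n p q : ℕ) (hn : 1 ≤ n) (hmn : n ≤ m)
    (H00 : Matrix (Fin p) (Fin p) ℝ) (H01 : Matrix (Fin p) (Fin q) ℝ)
    (H10 : Matrix (Fin q) (Fin p) ℝ) (H11 : Matrix (Fin q) (Fin q) ℝ)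
    (A : Matrix (Fin m) (Fin n) ℝ) (hA : A = Matrix.of fun _ _ => (1 : ℝ)) :
    (Matrix.fromBlocks ((1 : Matrix (Fin m) (Fin m) ℝ) ⊗ₖ H00) (A ⊗ₖ H01)
        (Aᵀ ⊗ₖ H10) ((1 : Matrix (Fin n) (Fin n) ℝ) ⊗ₖ H11)).charpoly =
      (Matrix.fromBlocks H00 (Real.sqrt (m * n) • H01)
          (Real.sqrt (m * n) • H10) H11).charpoly *
        (H00.charpoly * H11.charpoly) ^ (n - 1) *
        H00.charpoly ^ (m - n) := by
  haveI : NeZero n := ⟨by omega⟩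
  haveI : NeZero m := ⟨by omega⟩
  have hmR : (0:ℝ) < m := by exact_mod_cast Nat.pos_of_ne_zero (NeZero.ne m)
  have hnR : (0:ℝ) < n := by exact_mod_cast Nat.pos_of_ne_zero (NeZero.ne n)
  set σ : ℝ := Real.sqrt (m * n) with hσdef
  have hσ2 : σ * σ = (m : ℝ) * n := Real.mul_self_sqrt (by positivity)
  have hσpos : 0 < σ := Real.sqrt_pos.mpr (by positivity)
  set P := Pmat m 1 with hP
  set Pi' := Pinv m (1/m) with hPi
  set Q := Pmat n (σ/n) with hQ
  set Qi := Pinv n (1/σ) with hQi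
  have hPiP : Pi' * P = 1 := Pinv_mul_Pmat m 1 (1/m) (by field_simp)
  have hPPi : P * Pi' = 1 := mul_eq_one_comm.mp hPiP
  have hQiQ : Qi * Q = 1 := Pinv_mul_Pmat n (σ/n) (1/σ) (by field_simp)
  have hQQi : Q * Qi = 1 := mul_eq_one_comm.mp hQiQ
  set S : Matrix (Fin m) (Fin n) ℝ :=
    Matrix.of (fun i j => if i = 0 ∧ j = 0 then σ else 0) with hSdef
  have hS1 : P * S * Qi = A := by
    rw [hP, hQi, hSdef, Pmat_mul_single_mul_Pinv, hA]
    ext i j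
    simp only [Matrix.of_apply]
    field_simp
  have hST : Q * Sᵀ * Pi' = Aᵀ := by
    have hST : Sᵀ = Matrix.of (fun (i : Fin n) (j : Fin m) =>
        if i = 0 ∧ j = 0 then σ else 0) := by
      ext i j
      simp [hSdef, Matrix.transpose_apply, and_comm]
    rw [hQ, hPi, hST, Pmat_mul_single_mul_Pinv, hA]
    ext i j
    simp only [Matrix.of_apply, Matrix.transpose_apply]
    field_simp
    linear_combination hσ2
  set M' := Matrix.fromBlocks ((1 : Matrix (Fin m) (Fin m) ℝ) ⊗ₖ H00) (S ⊗ₖ H01)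
      (Sᵀ ⊗ₖ H10) ((1 : Matrix (Fin n) (Fin n) ℝ) ⊗ₖ H11) with hM'
  set Cmat := Matrix.fromBlocks (P ⊗ₖ (1 : Matrix (Fin p) (Fin p) ℝ)) 0 0
      (Q ⊗ₖ (1 : Matrix (Fin q) (Fin q) ℝ)) with hC
  set Dmat := Matrix.fromBlocks (Pi' ⊗ₖ (1 : Matrix (Fin p) (Fin p) ℝ)) 0 0
      (Qi ⊗ₖ (1 : Matrix (Fin q) (Fin q) ℝ)) with hD
  have hCD : Cmat * Dmat = 1 := by
    rw [hC, hD, Matrix.fromBlocks_multiply]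
    simp only [Matrix.mul_zero, Matrix.zero_mul, add_zero, zero_add,
      ← Matrix.mul_kronecker_mul, hPPi, hQQi, Matrix.one_mul,
      Matrix.one_kronecker_one, Matrix.fromBlocks_one]
  have hconj : Cmat * M' * Dmat = Matrix.fromBlocks
      ((1 : Matrix (Fin m) (Fin m) ℝ) ⊗ₖ H00) (A ⊗ₖ H01)
      (Aᵀ ⊗ₖ H10) ((1 : Matrix (Fin n) (Fin n) ℝ) ⊗ₖ H11) := by
    rw [hC, hD, hM', Matrix.fromBlocks_multiply, Matrix.fromBlocks_multiply]
    simp only [Matrix.mul_zero, Matrix.zero_mul, add_zero, zero_add]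
    rw [← hST, ← hS1]
    simp only [← Matrix.mul_kronecker_mul, Matrix.one_mul, Matrix.mul_one,
      one_mul, mul_one, hPPi, hQQi, Matrix.one_kronecker_one]
  have h1 : (Matrix.fromBlocks ((1 : Matrix (Fin m) (Fin m) ℝ) ⊗ₖ H00) (A ⊗ₖ H01)
      (Aᵀ ⊗ₖ H10) ((1 : Matrix (Fin n) (Fin n) ℝ) ⊗ₖ H11)).charpoly = M'.charpoly := by
    rw [← hconj]
    exact my_charpoly_conj _ _ _ hCD
  set T := Matrix.fromBlocks (Matrix.fromBlocks H00 (σ • H01) (σ • H10) H11) 0 0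
      (Matrix.fromBlocks ((1 : Matrix (Fin (m-1)) (Fin (m-1)) ℝ) ⊗ₖ H00) 0 0
        ((1 : Matrix (Fin (n-1)) (Fin (n-1)) ℝ) ⊗ₖ H11)) with hT
  have hre : M' = Matrix.reindex (bigE m n p q).symm (bigE m n p q).symm T := by
    ext x y
    simp only [Matrix.reindex_apply, Matrix.submatrix_apply, Equiv.symm_symm]
    rcases x with ⟨i, a⟩ | ⟨i, a⟩ <;> rcases y with ⟨j, b⟩ | ⟨j, b⟩
    · rcases hi : ek m i with x0 | i' <;> rcases hj : ek m j with y0 | j'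
      · obtain rfl : i = 0 := (ek_eq_inl_iff m i x0).mp hi
        obtain rfl : j = 0 := (ek_eq_inl_iff m j y0).mp hj
        rw [bigE_inl_inl hi, bigE_inl_inl hj]
        simp [hM', hT, Matrix.one_apply]
      · obtain rfl : i = 0 := (ek_eq_inl_iff m i x0).mp hi
        have hj0 : j ≠ 0 := fun h => by rw [h, ek_zero] at hj; cases hj
        rw [bigE_inl_inl hi, bigE_inl_inr hj]
        simp [hM', hT, Matrix.one_apply, Ne.symm hj0]
      · obtain rfl : j = 0 := (ek_eq_inl_iff m j y0).mp hj
        have hi0 : i ≠ 0 := fun h => by rw [h, ek_zero] at hi; cases hi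
        rw [bigE_inl_inr hi, bigE_inl_inl hj]
        simp [hM', hT, Matrix.one_apply, hi0]
      · rw [bigE_inl_inr hi, bigE_inl_inr hj]
        have hij : i = j ↔ i' = j' := by
          constructor
          · rintro rfl; rw [hi] at hj; exact Sum.inr.inj hj
          · rintro rfl; exact (ek m).injective (hi.trans hj.symm)
        by_cases h : i = j
        · obtain rfl : i' = j' := hij.mp h
          simp [hM', hT, h, Matrix.one_apply]
        · have h' : i' ≠ j' := fun hh => h (hij.mpr hh)
          simp [hM', hT, h, h', Matrix.one_apply]
    · rcases hi : ek m i with x0 | i' <;> rcases hj : ek n j with y0 | j'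
      · obtain rfl : i = 0 := (ek_eq_inl_iff m i x0).mp hi
        obtain rfl : j = 0 := (ek_eq_inl_iff n j y0).mp hj
        rw [bigE_inl_inl hi, bigE_inr_inl hj]
        simp [hM', hT, hSdef]
      · obtain rfl : i = 0 := (ek_eq_inl_iff m i x0).mp hi
        rw [bigE_inl_inl hi, bigE_inr_inr hj]
        have hj0 : j ≠ 0 := fun h => by rw [h, ek_zero] at hj; cases hj
        simp [hM', hT, hSdef, hj0]
      · obtain rfl : j = 0 := (ek_eq_inl_iff n j y0).mp hj
        have hi0 : i ≠ 0 := fun h => by rw [h, ek_zero] at hi; cases hi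
        rw [bigE_inl_inr hi, bigE_inr_inl hj]
        simp [hM', hT, hSdef, hi0]
      · rw [bigE_inl_inr hi, bigE_inr_inr hj]
        have hi0 : i ≠ 0 := fun h => by rw [h, ek_zero] at hi; cases hi
        simp [hM', hT, hSdef, hi0]
    · rcases hi : ek n i with x0 | i' <;> rcases hj : ek m j with y0 | j'
      · obtain rfl : i = 0 := (ek_eq_inl_iff n i x0).mp hi
        obtain rfl : j = 0 := (ek_eq_inl_iff m j y0).mp hj
        rw [bigE_inr_inl hi, bigE_inl_inl hj]
        simp [hM', hT, hSdef]
      · obtain rfl : i = 0 := (ek_eq_inl_iff n i x0).mp hi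
        have hj0 : j ≠ 0 := fun h => by rw [h, ek_zero] at hj; cases hj
        rw [bigE_inr_inl hi, bigE_inl_inr hj]
        simp [hM', hT, hSdef, hj0]
      · obtain rfl : j = 0 := (ek_eq_inl_iff m j y0).mp hj
        have hi0 : i ≠ 0 := fun h => by rw [h, ek_zero] at hi; cases hi
        rw [bigE_inr_inr hi, bigE_inl_inl hj]
        simp [hM', hT, hSdef, hi0]
      · have hi0 : i ≠ 0 := fun h => by rw [h, ek_zero] at hi; cases hi
        rw [bigE_inr_inr hi, bigE_inl_inr hj]
        simp [hM', hT, hSdef, hi0]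
    · rcases hi : ek n i with x0 | i' <;> rcases hj : ek n j with y0 | j'
      · obtain rfl : i = 0 := (ek_eq_inl_iff n i x0).mp hi
        obtain rfl : j = 0 := (ek_eq_inl_iff n j y0).mp hj
        rw [bigE_inr_inl hi, bigE_inr_inl hj]
        simp [hM', hT, Matrix.one_apply]
      · obtain rfl : i = 0 := (ek_eq_inl_iff n i x0).mp hi
        have hj0 : j ≠ 0 := fun h => by rw [h, ek_zero] at hj; cases hj
        rw [bigE_inr_inl hi, bigE_inr_inr hj]
        simp [hM', hT, Matrix.one_apply, Ne.symm hj0]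
      · obtain rfl : j = 0 := (ek_eq_inl_iff n j y0).mp hj
        have hi0 : i ≠ 0 := fun h => by rw [h, ek_zero] at hi; cases hi
        rw [bigE_inr_inr hi, bigE_inr_inl hj]
        simp [hM', hT, Matrix.one_apply, hi0]
      · rw [bigE_inr_inr hi, bigE_inr_inr hj]
        have hij : i = j ↔ i' = j' := by
          constructor
          · rintro rfl; rw [hi] at hj; exact Sum.inr.inj hj
          · rintro rfl; exact (ek n).injective (hi.trans hj.symm)
        by_cases h : i = j
        · obtain rfl : i' = j' := hij.mp h
          simp [hM', hT, h, Matrix.one_apply]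
        · have h' : i' ≠ j' := fun hh => h (hij.mpr hh)
          simp [hM', hT, h, h', Matrix.one_apply]
  have h2 : M'.charpoly = T.charpoly := by
    rw [hre, Matrix.charpoly_reindex]
  have h3 : T.charpoly = (Matrix.fromBlocks H00 (σ • H01) (σ • H10) H11).charpoly *
      (H00.charpoly ^ (m - 1) * H11.charpoly ^ (n - 1)) := by
    rw [hT, Matrix.charpoly_fromBlocks_zero₂₁, Matrix.charpoly_fromBlocks_zero₂₁,
      my_charpoly_one_kron, my_charpoly_one_kron, Fintype.card_fin, Fintype.card_fin]
  rw [h1, h2, h3]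
  have hpow : m - 1 = (n - 1) + (m - n) := by omega
  rw [hpow, pow_add, mul_pow]
  ring
end
end

section
/- Let k ≥ 1 and j be natural numbers with j ≤ 2k. Over ℂ (or over ℝ), let C be the 2k×2k cyclic shift matrix (C a b = 1 if a = b + 1 modulo 2k, and 0 otherwise). Set H00 = C^j + C^k + C^(2k−j), let H01 be the 2k×4k matrix formed by placing I_{2k} and C side by side, let H10 = H01ᵀ, and let H11 be the 4k×4k block matrix [[C^j + C^(2k−j), C^(k+1)], [C^(k−1), C^j + C^(2k−j)]]. Then the compatibility conditions hold: H00·H01 = H01·H11 and H11·H10 = H10·H00. -/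
open Matrix

/-!
Only two facts about the cyclic shift `C` enter: `A = Cʲ + C²ᵏ⁻ʲ` commutes with `C`, and `C` is
orthogonal, being a permutation matrix. With these, both identities reduce blockwise to
`C ⋅ Cᵏ⁻¹ = Cᵏ`, `Cᵏ⁺¹ ⋅ Cᵀ = Cᵏ` and `Cᵀ ⋅ Cᵏ = Cᵏ⁻¹` (here `k ≥ 1`), and to `A` commuting with
`C` and with `Cᵀ = C⁻¹`.
-/

section CompatibleBlocks

variable {n R : Type*} [Fintype n] [DecidableEq n] [Semiring R]

theorem add_pow_mul_fromCols_one_eq {C A : Matrix n n R} (hAC : Commute A C) {k : ℕ}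
    (hk : 1 ≤ k) :
    (A + C ^ k) * fromCols (1 : Matrix n n R) C =
      fromCols (1 : Matrix n n R) C * fromBlocks A (C ^ (k + 1)) (C ^ (k - 1)) A := by
  have hCk : C * C ^ (k - 1) = C ^ k := by rw [← pow_succ', Nat.sub_add_cancel hk]
  rw [mul_fromCols, fromCols_mul_fromBlocks, fromCols_ext_iff, mul_one, one_mul, one_mul, hCk,
    add_mul, hAC.eq, ← pow_succ, add_comm (C * A)]
  exact ⟨rfl, rfl⟩

theorem fromBlocks_mul_transpose_fromCols_one_eq {C A : Matrix n n R} (hAC : Commute A C)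
    (hCCt : C * Cᵀ = 1) (hCtC : Cᵀ * C = 1) {k : ℕ} (hk : 1 ≤ k) :
    fromBlocks A (C ^ (k + 1)) (C ^ (k - 1)) A * (fromCols (1 : Matrix n n R) C)ᵀ =
      (fromCols (1 : Matrix n n R) C)ᵀ * (A + C ^ k) := by
  have hACt : A * Cᵀ = Cᵀ * A := (Commute.units_inv_right (u := ⟨C, Cᵀ, hCCt, hCtC⟩) hAC).eq
  have hCk : C ^ k = C * C ^ (k - 1) := by rw [← pow_succ', Nat.sub_add_cancel hk]
  rw [transpose_fromCols, transpose_one, fromBlocks_mul_fromRows, fromRows_mul, fromRows_ext_iff,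
    mul_one, one_mul, mul_one, mul_add Cᵀ, pow_succ, mul_assoc, hCCt, mul_one, hCk, ← mul_assoc Cᵀ,
    hCtC, one_mul, hACt, add_comm (C ^ (k - 1))]
  exact ⟨rfl, rfl⟩

end CompatibleBlocks

section PermMatrix

variable {n R : Type*} [Fintype n] [DecidableEq n] [NonAssocSemiring R]

theorem Matrix.permMatrix_mul_transpose_self (σ : Equiv.Perm n) :
    σ.permMatrix R * (σ.permMatrix R)ᵀ = 1 := by
  rw [transpose_permMatrix, ← permMatrix_mul, inv_mul_cancel, permMatrix_one]

theorem Matrix.transpose_permMatrix_mul_self (σ : Equiv.Perm n) :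
    (σ.permMatrix R)ᵀ * σ.permMatrix R = 1 := by
  rw [transpose_permMatrix, ← permMatrix_mul, mul_inv_cancel, permMatrix_one]

end PermMatrix

theorem eq_permMatrix_subRight_one {m : ℕ} [NeZero m] {R : Type*} [Zero R] [One R]
    {C : Matrix (Fin m) (Fin m) R}
    (hC : ∀ a b : Fin m, C a b = if (a : ℕ) = ((b : ℕ) + 1) % m then 1 else 0) :
    C = Equiv.Perm.permMatrix R (Equiv.subRight (1 : Fin m)) := by
  ext a b
  have : (a : ℕ) = ((b : ℕ) + 1) % m ↔ a - 1 = b := by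
    rw [sub_eq_iff_eq_add, Fin.ext_iff, Fin.val_add, Fin.val_one', Nat.add_mod_mod]
  simp [hC, PEquiv.toMatrix_apply, this]

theorem stmt14_general (k j : ℕ) (hk : 1 ≤ k)
    (Cyc : Matrix (Fin (2 * k)) (Fin (2 * k)) ℂ)
    (hCyc : ∀ a b : Fin (2 * k),
      Cyc a b = if (a : ℕ) = ((b : ℕ) + 1) % (2 * k) then 1 else 0)
    (H00 : Matrix (Fin (2 * k)) (Fin (2 * k)) ℂ)
    (hH00 : H00 = Cyc ^ j + Cyc ^ k + Cyc ^ (2 * k - j))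
    (H01 : Matrix (Fin (2 * k)) (Fin (2 * k) ⊕ Fin (2 * k)) ℂ)
    (hH01 : H01 = Matrix.fromCols 1 Cyc)
    (H10 : Matrix (Fin (2 * k) ⊕ Fin (2 * k)) (Fin (2 * k)) ℂ)
    (hH10 : H10 = H01ᵀ)
    (H11 : Matrix (Fin (2 * k) ⊕ Fin (2 * k)) (Fin (2 * k) ⊕ Fin (2 * k)) ℂ)
    (hH11 : H11 = Matrix.fromBlocks (Cyc ^ j + Cyc ^ (2 * k - j)) (Cyc ^ (k + 1))
      (Cyc ^ (k - 1)) (Cyc ^ j + Cyc ^ (2 * k - j))) :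
    H00 * H01 = H01 * H11 ∧ H11 * H10 = H10 * H00 := by
  have : NeZero (2 * k) := ⟨by omega⟩
  have hCyc_perm := eq_permMatrix_subRight_one hCyc
  have hCCt : Cyc * Cycᵀ = 1 := hCyc_perm ▸ permMatrix_mul_transpose_self _
  have hCtC : Cycᵀ * Cyc = 1 := hCyc_perm ▸ transpose_permMatrix_mul_self _
  have hAC : Commute (Cyc ^ j + Cyc ^ (2 * k - j)) Cyc :=
    ((Commute.self_pow Cyc j).add_right (Commute.self_pow Cyc _)).symm
  have hH00' : H00 = Cyc ^ j + Cyc ^ (2 * k - j) + Cyc ^ k := by rw [hH00, add_right_comm]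
  subst hH10
  rw [hH00', hH01, hH11]
  exact ⟨add_pow_mul_fromCols_one_eq hAC hk,
    fromBlocks_mul_transpose_fromCols_one_eq hAC hCCt hCtC hk⟩

theorem stmt14 (k j : ℕ) (hk : 1 ≤ k) (hj : j ≤ 2 * k)
    (Cyc : Matrix (Fin (2 * k)) (Fin (2 * k)) ℂ)
    (hCyc : ∀ a b : Fin (2 * k),
      Cyc a b = if (a : ℕ) = ((b : ℕ) + 1) % (2 * k) then 1 else 0)
    (H00 : Matrix (Fin (2 * k)) (Fin (2 * k)) ℂ)
    (hH00 : H00 = Cyc ^ j + Cyc ^ k + Cyc ^ (2 * k - j))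
    (H01 : Matrix (Fin (2 * k)) (Fin (2 * k) ⊕ Fin (2 * k)) ℂ)
    (hH01 : H01 = Matrix.fromCols 1 Cyc)
    (H10 : Matrix (Fin (2 * k) ⊕ Fin (2 * k)) (Fin (2 * k)) ℂ)
    (hH10 : H10 = H01ᵀ)
    (H11 : Matrix (Fin (2 * k) ⊕ Fin (2 * k)) (Fin (2 * k) ⊕ Fin (2 * k)) ℂ)
    (hH11 : H11 = Matrix.fromBlocks (Cyc ^ j + Cyc ^ (2 * k - j)) (Cyc ^ (k + 1))
      (Cyc ^ (k - 1)) (Cyc ^ j + Cyc ^ (2 * k - j))) :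
    H00 * H01 = H01 * H11 ∧ H11 * H10 = H10 * H00 :=
  stmt14_general k j hk Cyc hCyc H00 hH00 H01 hH01 H10 hH10 H11 hH11
end
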